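/- arXiv:2410.21032 — 7 statements merged into one kernel-verified Lean document; each statement's English description precedes it below -/
import Mathlib

section
/- Let N ≥ 1 and z, w ∈ ℂ. Then ∫ exp(−Tr(J Jᴴ)) · det(z·I_N − J) · det(conj(w)·I_N − Jᴴ) dJ = π^{N²} · N! · E_N(z·conj(w)), where the integral is over all N×N complex matrices J with respect to Lebesgue measure. In particular, dividing by the value at z = w = 0 (which is π^{N²}·N!), the normalized expectation of one pair of conjugate characteristic polynomials in the complex Ginibre ensemble (class A) equals E_N(z·conj(w)). -/
open MeasureTheory Matrix Finset

/-- The truncated exponential `E_n(x) = ∑_{j=0}^n x^j/j!`. -/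
noncomputable def truncExp (n : ℕ) (x : ℂ) : ℂ :=
  ∑ j ∈ Finset.range (n + 1), x ^ j / (Nat.factorial j : ℂ)

/-!
Expand both determinants by the Leibniz formula. The entries of `J` are independent standard
complex Gaussians, and the only moments that enter are `𝔼 1 = 1`, `𝔼 a = 𝔼 ā = 0` and
`𝔼 |a|² = 1`. Hence the term indexed by a pair of permutations `(σ, τ)` factorises over the
entries, and for `A = z • 1`, `B = w • 1` it vanishes unless `σ = τ`; the diagonal term equals
`(1 + z w̄) ^ (number of fixed points of σ)`. Summing over `σ`, a set of `k` fixed points is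
contained in the fixed-point set of exactly `(N - k)!` permutations, which gives
`∑_k C(N, k) (N - k)! (z w̄)^k = N! E_N(z w̄)`.
-/

section GaussianMoments

open Real ComplexConjugate

theorem Complex.integral_norm_pow_mul_exp_neg_norm_sq (k : ℕ) :
    ∫ a : ℂ, ‖a‖ ^ k * rexp (-‖a‖ ^ 2) = π * Real.Gamma (k / 2 + 1) := by
  have h := Complex.integral_rpow_mul_exp_neg_rpow (p := 2) (q := k) one_le_two
    (by linarith [k.cast_nonneg (α := ℝ)])
  simp only [rpow_natCast, rpow_two] at h
  rw [h]
  ring_nf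

theorem Complex.integrable_norm_pow_mul_exp_neg_norm_sq (k : ℕ) :
    Integrable fun a : ℂ ↦ ‖a‖ ^ k * rexp (-‖a‖ ^ 2) := by
  refine .of_integral_ne_zero ?_
  rw [integral_norm_pow_mul_exp_neg_norm_sq]
  exact (mul_pos pi_pos (Gamma_pos_of_pos (by positivity))).ne'

theorem Complex.integrable_mul_exp_neg_norm_sq :
    Integrable fun a : ℂ ↦ a * rexp (-‖a‖ ^ 2) := by
  refine (integrable_norm_pow_mul_exp_neg_norm_sq 1).mono' (by fun_prop) (.of_forall fun a ↦ ?_)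
  rw [norm_mul, Complex.norm_real, norm_of_nonneg (exp_pos _).le, pow_one]

theorem Complex.integrable_conj_mul_exp_neg_norm_sq :
    Integrable fun a : ℂ ↦ conj (a * rexp (-‖a‖ ^ 2)) :=
  integrable_mul_exp_neg_norm_sq.norm.mono' (by fun_prop)
    (.of_forall fun a ↦ (Complex.norm_conj _).le)

theorem Complex.integrable_ofReal_norm_pow_mul_exp_neg_norm_sq (k : ℕ) :
    Integrable fun a : ℂ ↦ ((‖a‖ ^ k * rexp (-‖a‖ ^ 2) : ℝ) : ℂ) :=
  (integrable_norm_pow_mul_exp_neg_norm_sq k).ofReal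

theorem Complex.integral_mul_exp_neg_norm_sq : ∫ a : ℂ, a * rexp (-‖a‖ ^ 2) = 0 := by
  have h := integral_neg_eq_self (fun a : ℂ ↦ a * rexp (-‖a‖ ^ 2)) volume
  simp only [norm_neg, neg_mul, integral_neg] at h
  exact neg_eq_self.mp h

theorem Complex.exp_neg_norm_sq_mul_affine_mul_conj_affine (α β γ δ a : ℂ) :
    rexp (-‖a‖ ^ 2) * ((α - β * a) * conj (γ - δ * a)) =
      α * conj γ * ((‖a‖ ^ 0 * rexp (-‖a‖ ^ 2) : ℝ) : ℂ)
        - α * conj δ * conj (a * rexp (-‖a‖ ^ 2)) - β * conj γ * (a * rexp (-‖a‖ ^ 2))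
        + β * conj δ * ((‖a‖ ^ 2 * rexp (-‖a‖ ^ 2) : ℝ) : ℂ) := by
  simp only [map_sub, map_mul, Complex.conj_ofReal]
  push_cast
  rw [← Complex.mul_conj']
  ring

theorem Complex.integrable_exp_neg_norm_sq_mul_affine_mul_conj_affine (α β γ δ : ℂ) :
    Integrable fun a : ℂ ↦ rexp (-‖a‖ ^ 2) * ((α - β * a) * conj (γ - δ * a)) := by
  have h₀ := integrable_ofReal_norm_pow_mul_exp_neg_norm_sq 0
  have h₂ := integrable_ofReal_norm_pow_mul_exp_neg_norm_sq 2
  have h₁ := integrable_mul_exp_neg_norm_sq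
  have h₁' := integrable_conj_mul_exp_neg_norm_sq
  simp_rw [exp_neg_norm_sq_mul_affine_mul_conj_affine]
  fun_prop

theorem Complex.integral_exp_neg_norm_sq_mul_affine_mul_conj_affine (α β γ δ : ℂ) :
    ∫ a : ℂ, rexp (-‖a‖ ^ 2) * ((α - β * a) * conj (γ - δ * a)) =
      π * (α * conj γ + β * conj δ) := by
  have h₀ := integrable_ofReal_norm_pow_mul_exp_neg_norm_sq 0
  have h₂ := integrable_ofReal_norm_pow_mul_exp_neg_norm_sq 2
  have h₁ := integrable_mul_exp_neg_norm_sq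
  have h₁' := integrable_conj_mul_exp_neg_norm_sq
  simp_rw [exp_neg_norm_sq_mul_affine_mul_conj_affine]
  rw [integral_add, integral_sub, integral_sub, integral_const_mul, integral_const_mul,
    integral_const_mul, integral_const_mul, integral_conj, integral_complex_ofReal,
    integral_complex_ofReal, integral_norm_pow_mul_exp_neg_norm_sq,
    integral_norm_pow_mul_exp_neg_norm_sq, integral_mul_exp_neg_norm_sq]
  · norm_num
    ring
  all_goals fun_prop

end GaussianMoments

section Fubini

variable {ι κ E : Type*} [Fintype ι] [Fintype κ] [MeasureSpace E]
  [SigmaFinite (volume : Measure E)]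

theorem MeasureTheory.Integrable.fintype_prod_prod {𝕜 : Type*} [NormedCommRing 𝕜]
    {f : ι → κ → E → 𝕜} (hf : ∀ i j, Integrable (f i j)) :
    Integrable fun x : ι → κ → E ↦ ∏ i, ∏ j, f i j (x i j) :=
  Integrable.fintype_prod (f := fun i (r : κ → E) ↦ ∏ j, f i j (r j)) fun i ↦
    Integrable.fintype_prod (hf i)

theorem MeasureTheory.integral_fintype_prod_prod_volume_eq_prod_prod {𝕜 : Type*} [RCLike 𝕜]
    (f : ι → κ → E → 𝕜) :
    ∫ x : ι → κ → E, ∏ i, ∏ j, f i j (x i j) = ∏ i, ∏ j, ∫ y, f i j y := by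
  rw [integral_fintype_prod_volume_eq_prod (fun i (r : κ → E) ↦ ∏ j, f i j (r j))]
  exact prod_congr rfl fun i _ ↦ integral_fintype_prod_volume_eq_prod (f i)

end Fubini

section FixedPoints

open Equiv
open scoped Nat

variable {n : Type*} [Fintype n] [DecidableEq n]

theorem card_perm_fixing (s : Finset n) :
    #{σ : Perm n | ∀ i ∈ s, σ i = i} = (Fintype.card n - #s)! := by
  rw [← Fintype.card_subtype, ← Fintype.card_coe s, ← Fintype.card_subtype_compl,
    ← Fintype.card_perm]
  refine (Fintype.card_congr ((Perm.subtypeEquivSubtypePerm (· ∉ s)).trans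
    (Equiv.subtypeEquivRight fun σ ↦ ?_))).symm
  simp

theorem sum_perm_prod_ite_eq_factorial_mul_truncExp (x : ℂ) :
    ∑ σ : Perm n, ∏ i, (if σ i = i then x + 1 else 1) =
      (Fintype.card n)! * truncExp (Fintype.card n) x := by
  calc ∑ σ : Perm n, ∏ i, (if σ i = i then x + 1 else 1)
      = ∑ σ : Perm n, ∑ t ∈ univ.powerset, if ∀ i ∈ t, σ i = i then x ^ #t else 0 := by
        refine sum_congr rfl fun σ _ ↦ ?_
        have h : ∀ i, (if σ i = i then x + 1 else 1) = (if σ i = i then x else 0) + 1 :=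
          fun i ↦ by split_ifs <;> simp
        simp_rw [h, prod_add, prod_const_one, mul_one, prod_ite_zero, prod_const]
    _ = ∑ t ∈ (univ : Finset n).powerset, x ^ #t * (Fintype.card n - #t)! := by
        rw [sum_comm]
        refine sum_congr rfl fun t _ ↦ ?_
        rw [sum_ite, sum_const_zero, add_zero, sum_const, card_perm_fixing, nsmul_eq_mul,
          mul_comm]
    _ = ∑ k ∈ range (Fintype.card n + 1),
          (Fintype.card n).choose k * (x ^ k * (Fintype.card n - k)!) := by
        rw [sum_powerset_apply_card (fun k ↦ x ^ k * ((Fintype.card n - k)! : ℂ)), card_univ]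
        simp only [nsmul_eq_mul]
    _ = (Fintype.card n)! * truncExp (Fintype.card n) x := by
        rw [truncExp, mul_sum]
        refine sum_congr rfl fun k hk ↦ ?_
        rw [← Nat.choose_mul_factorial_mul_factorial (Nat.lt_succ_iff.mp (mem_range.mp hk))]
        push_cast
        field_simp [k.factorial_ne_zero]

end FixedPoints

section Leibniz

open Equiv Real ComplexConjugate

theorem prod_apply_perm_eq_prod_prod_ite {n R : Type*} [Fintype n] [DecidableEq n]
    [CommMonoid R] (M : Matrix n n R) (σ : Perm n) :
    ∏ i, M i (σ i) = ∏ i, ∏ j, if σ i = j then M i j else 1 := by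
  simp only [prod_ite_eq, mem_univ, if_true]

theorem Matrix.det_eq_sum_sign_mul_prod_apply_perm {n R : Type*} [Fintype n] [DecidableEq n]
    [CommRing R] (M : Matrix n n R) :
    M.det = ∑ σ : Perm n, (Perm.sign σ : R) * ∏ i, M i (σ i) := by
  rw [← det_transpose, det_apply']
  rfl

theorem exp_neg_trace_mul_conjTranspose {n : Type*} [Fintype n] (J : n → n → ℂ) :
    Complex.exp (-(of J * (of J)ᴴ).trace) = ∏ i, ∏ j, (rexp (-‖J i j‖ ^ 2) : ℂ) := by
  simp only [trace, Matrix.diag, mul_apply, conjTranspose_apply, of_apply, RCLike.star_def,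
    Complex.mul_conj', ← Finset.sum_neg_distrib, Complex.exp_sum]
  push_cast
  rfl

variable {n : Type*} [DecidableEq n]

/-- The factor contributed by the entry `a = J i j` to the term `(σ, τ)` of the Leibniz
expansion of `exp (-tr (J Jᴴ)) * det (A - J) * conj (det (B - J))`. -/
noncomputable def leibnizEntry (A B : Matrix n n ℂ) (σ τ : Perm n) (i j : n) (a : ℂ) : ℂ :=
  rexp (-‖a‖ ^ 2) *
    ((if σ i = j then A i j - a else 1) * conj (if τ i = j then B i j - a else 1))

def leibnizEntryMean (A B : Matrix n n ℂ) (σ τ : Perm n) (i j : n) : ℂ :=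
  (if σ i = j then A i j else 1) * conj (if τ i = j then B i j else 1) +
    if σ i = j ∧ τ i = j then 1 else 0

theorem leibnizEntry_eq_affine (A B : Matrix n n ℂ) (σ τ : Perm n) (i j : n) :
    leibnizEntry A B σ τ i j = fun a ↦ rexp (-‖a‖ ^ 2) *
      (((if σ i = j then A i j else 1) - (if σ i = j then 1 else 0) * a) *
        conj ((if τ i = j then B i j else 1) - (if τ i = j then 1 else 0) * a)) := by
  ext a
  simp only [leibnizEntry]
  split_ifs <;> simp

theorem integrable_leibnizEntry (A B : Matrix n n ℂ) (σ τ : Perm n) (i j : n) :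
    Integrable (leibnizEntry A B σ τ i j) := by
  rw [leibnizEntry_eq_affine]
  exact Complex.integrable_exp_neg_norm_sq_mul_affine_mul_conj_affine _ _ _ _

theorem integral_leibnizEntry (A B : Matrix n n ℂ) (σ τ : Perm n) (i j : n) :
    ∫ a, leibnizEntry A B σ τ i j a = π * leibnizEntryMean A B σ τ i j := by
  rw [leibnizEntry_eq_affine, Complex.integral_exp_neg_norm_sq_mul_affine_mul_conj_affine,
    leibnizEntryMean]
  split_ifs <;> simp_all

/-- If `σ i ≠ τ i`, one of `σ i`, `τ i` differs from `i`, and the entry of row `i` it selects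
has mean zero. -/
theorem prod_prod_leibnizEntryMean_smul_one [Fintype n] (z w : ℂ) (σ τ : Perm n) :
    ∏ i, ∏ j, leibnizEntryMean (z • 1) (w • 1) σ τ i j =
      if σ = τ then ∏ i, (if σ i = i then z * conj w + 1 else 1) else 0 := by
  simp only [leibnizEntryMean]
  split_ifs with hστ
  · subst hστ
    refine prod_congr rfl fun i _ ↦ ?_
    rw [prod_eq_single (σ i) (fun j _ hj ↦ by simp [Ne.symm hj]) (by simp)]
    rcases eq_or_ne (σ i) i with hσ | hσ <;> simp [hσ, one_apply, Ne.symm]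
  · obtain ⟨i, hi⟩ : ∃ i, σ i ≠ τ i := by
      by_contra! h
      exact hστ (Equiv.ext h)
    refine prod_eq_zero (mem_univ i) ?_
    rcases eq_or_ne (σ i) i with hσ | hσ
    · refine prod_eq_zero (mem_univ (τ i)) ?_
      have : i ≠ τ i := fun h ↦ hi (hσ.trans h)
      simp [hi, this, one_apply]
    · refine prod_eq_zero (mem_univ (σ i)) ?_
      simp [hi.symm, hσ.symm, one_apply]

variable [Fintype n]

theorem exp_neg_trace_mul_det_sub_mul_star_det_sub (A B : Matrix n n ℂ) (J : n → n → ℂ) :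
    Complex.exp (-(of J * (of J)ᴴ).trace) * (A - of J).det * star (B - of J).det =
      ∑ σ : Perm n, ∑ τ : Perm n, (Perm.sign σ * Perm.sign τ : ℂ) *
        ∏ i, ∏ j, leibnizEntry A B σ τ i j (J i j) := by
  rw [mul_assoc, det_eq_sum_sign_mul_prod_apply_perm, det_eq_sum_sign_mul_prod_apply_perm,
    star_sum, sum_mul_sum, mul_sum]
  refine sum_congr rfl fun σ _ ↦ ?_
  rw [mul_sum]
  refine sum_congr rfl fun τ _ ↦ ?_
  rw [prod_apply_perm_eq_prod_prod_ite (A - of J), prod_apply_perm_eq_prod_prod_ite (B - of J)]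
  simp only [leibnizEntry, prod_mul_distrib, exp_neg_trace_mul_conjTranspose, star_mul',
    star_prod, star_intCast, Matrix.sub_apply, Matrix.of_apply, apply_ite (starRingEnd ℂ),
    map_one, Complex.star_def]
  ring

theorem integral_exp_neg_trace_mul_det_sub_mul_star_det_sub (A B : Matrix n n ℂ) :
    ∫ J : n → n → ℂ, Complex.exp (-(of J * (of J)ᴴ).trace) * (A - of J).det *
        star (B - of J).det =
      π ^ (Fintype.card n ^ 2) * ∑ σ : Perm n, ∑ τ : Perm n,
        (Perm.sign σ * Perm.sign τ : ℂ) * ∏ i, ∏ j, leibnizEntryMean A B σ τ i j := by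
  have hint : ∀ σ τ : Perm n, Integrable fun J : n → n → ℂ ↦
      ∏ i, ∏ j, leibnizEntry A B σ τ i j (J i j) :=
    fun σ τ ↦ Integrable.fintype_prod_prod (integrable_leibnizEntry A B σ τ)
  simp_rw [exp_neg_trace_mul_det_sub_mul_star_det_sub]
  rw [integral_finsetSum _ fun σ _ ↦ integrable_finsetSum _ fun τ _ ↦
    (hint σ τ).const_mul _, mul_sum]
  refine sum_congr rfl fun σ _ ↦ ?_
  rw [integral_finsetSum _ fun τ _ ↦ (hint σ τ).const_mul _, mul_sum]
  refine sum_congr rfl fun τ _ ↦ ?_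
  simp only [integral_const_mul, integral_fintype_prod_prod_volume_eq_prod_prod,
    integral_leibnizEntry, prod_mul_distrib, prod_const, card_univ, ← pow_mul, ← sq]
  ring

open scoped Nat in
theorem integral_exp_neg_trace_mul_det_smul_one_sub_mul_star_det_smul_one_sub (z w : ℂ) :
    ∫ J : n → n → ℂ, Complex.exp (-(of J * (of J)ᴴ).trace) * (z • 1 - of J).det *
        star (w • 1 - of J).det =
      π ^ (Fintype.card n ^ 2) * (Fintype.card n)! * truncExp (Fintype.card n) (z * conj w) := by
  have hsign : ∀ σ : Perm n, (Perm.sign σ * Perm.sign σ : ℂ) = 1 := fun σ ↦ by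
    rw [← Int.cast_mul, ← Units.val_mul, Int.units_mul_self, Units.val_one, Int.cast_one]
  simp only [integral_exp_neg_trace_mul_det_sub_mul_star_det_sub,
    prod_prod_leibnizEntryMean_smul_one, mul_ite, mul_zero, sum_ite_eq, mem_univ, if_true,
    hsign, one_mul]
  rw [sum_perm_prod_ite_eq_factorial_mul_truncExp, mul_assoc]

end Leibniz

theorem statement0_general (N : ℕ) (z w : ℂ) :
    (∫ J : Fin N → Fin N → ℂ,
      Complex.exp (-((Matrix.of J * (Matrix.of J)ᴴ).trace)) *
        (z • (1 : Matrix (Fin N) (Fin N) ℂ) - Matrix.of J).det *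
        ((starRingEnd ℂ) w • (1 : Matrix (Fin N) (Fin N) ℂ) - (Matrix.of J)ᴴ).det)
      = (Real.pi : ℂ) ^ (N ^ 2) * (Nat.factorial N : ℂ) *
          truncExp N (z * (starRingEnd ℂ) w) := by
  have hconj (J : Fin N → Fin N → ℂ) :
      (starRingEnd ℂ) w • (1 : Matrix (Fin N) (Fin N) ℂ) - (of J)ᴴ =
        (w • 1 - of J)ᴴ := by
    rw [conjTranspose_sub, conjTranspose_smul, conjTranspose_one]
    rfl
  simp_rw [hconj, det_conjTranspose]
  simpa using
    integral_exp_neg_trace_mul_det_smul_one_sub_mul_star_det_smul_one_sub (n := Fin N) z w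

/-- Class A (complex Ginibre): the Gaussian average of one pair of conjugate characteristic
polynomials equals `π^{N²} · N! · E_N(z w̄)`. -/
theorem statement0 (N : ℕ) (hN : 1 ≤ N) (z w : ℂ) :
    (∫ J : Fin N → Fin N → ℂ,
      Complex.exp (-((Matrix.of J * (Matrix.of J)ᴴ).trace)) *
        (z • (1 : Matrix (Fin N) (Fin N) ℂ) - Matrix.of J).det *
        ((starRingEnd ℂ) w • (1 : Matrix (Fin N) (Fin N) ℂ) - (Matrix.of J)ᴴ).det)
      = (Real.pi : ℂ) ^ (N ^ 2) * (Nat.factorial N : ℂ) *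
          truncExp N (z * (starRingEnd ℂ) w) :=
  statement0_general N z w
end

section
/- Let N ≥ 1 and x ≥ 0 be real. Define f_N(x) := ∫_0^∞ ∫_0^∞ exp(−r−s) · (4x² + 4x(r+s) + (r−s)²)^N dr ds. Then f_N(x) = e^{2x} · ∑_{j=0}^{N} (N!/j!) · (4x)^{N−j} · Γ(2j+1, 2x), where Γ(a, t) := ∫_t^∞ u^{a−1} e^{−u} du is the upper incomplete Gamma function. -/
open MeasureTheory Finset

/-- The two-dimensional Laplace-type integral `f_N(x)` arising from the pair of
conjugate characteristic polynomials of the class AII† ensemble. -/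
noncomputable def fAII (N : ℕ) (x : ℝ) : ℝ :=
  ∫ r in Set.Ioi (0 : ℝ), ∫ s in Set.Ioi (0 : ℝ),
    Real.exp (-r - s) * (4 * x ^ 2 + 4 * x * (r + s) + (r - s) ^ 2) ^ N

/-- The upper incomplete Gamma function `Γ(a,t) = ∫_t^∞ u^{a−1} e^{−u} du`. -/
noncomputable def upperGamma (a t : ℝ) : ℝ :=
  ∫ u in Set.Ioi t, u ^ (a - 1) * Real.exp (-u)

/-!
Write `E(r,s) = 4x² + 4x(r+s) + (r-s)²`. Then `∂ᵣE + ∂ₛE = 8x`, so integrating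
`(∂ᵣ + ∂ₛ) E^{n+1}` against `e^{-r-s}` over the quadrant gives `8x(n+1) f_n`. Integrating by
parts in `s` (and, by the symmetry `E(r,s) = E(s,r)`, identically in `r`) turns each half into
`f_{n+1} - ∫₀^∞ e^{-r} E(r,0)^{n+1} dr`, and `E(r,0) = (2x+r)²` makes the boundary term
`e^{2x} Γ(2n+3, 2x)`. Solving the recursion `f_{n+1} = e^{2x} Γ(2n+3, 2x) + 4x(n+1) f_n`
from `f_0 = 1 = e^{2x} Γ(1, 2x)` gives the sum.
-/

open Real Set Filter Topology Function

local notation "μ₊" => volume.restrict (Ioi (0 : ℝ))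

lemma exp_neg_sub (r s : ℝ) : exp (-r - s) = exp (-r) * exp (-s) := by
  rw [← exp_add, sub_eq_add_neg]

section ExpWeighted

variable {g g' : ℝ → ℝ} {b C C' : ℝ} {k k' : ℕ}

lemma integrableOn_add_pow_mul_exp_neg (b : ℝ) (k : ℕ) :
    IntegrableOn (fun s => (b + s) ^ k * exp (-s)) (Ioi 0) := by
  simp_rw [add_comm b, add_pow, Finset.sum_mul]
  refine integrable_finsetSum _ fun j _ => ?_
  have hj : IntegrableOn (fun s : ℝ => s ^ j * exp (-s)) (Ioi 0) :=
    (GammaIntegral_convergent (Nat.cast_add_one_pos j)).congr_fun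
      (fun s _ => by simp [rpow_natCast, mul_comm]) measurableSet_Ioi
  exact IntegrableOn.congr_fun (hj.const_mul (b ^ (k - j) * k.choose j)) (fun s _ => by ring)
    measurableSet_Ioi

lemma tendsto_add_pow_mul_exp_neg (b : ℝ) (k : ℕ) :
    Tendsto (fun s => (b + s) ^ k * exp (-s)) atTop (𝓝 0) := by
  have h := ((tendsto_pow_mul_exp_neg_atTop_nhds_zero k).comp
    (tendsto_atTop_add_const_left atTop b tendsto_id)).const_mul (exp b)
  rw [mul_zero] at h
  refine h.congr fun s => ?_
  simp only [comp_apply, id, neg_add, exp_add, exp_neg b]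
  field_simp

lemma norm_exp_neg_mul_le (hbound : ∀ s, 0 ≤ s → |g s| ≤ C * (b + s) ^ k) {s : ℝ}
    (hs : 0 ≤ s) :
    ‖exp (-s) * g s‖ ≤ C * ((b + s) ^ k * exp (-s)) := by
  rw [norm_mul, norm_of_nonneg (exp_pos _).le, Real.norm_eq_abs]
  calc exp (-s) * |g s| ≤ exp (-s) * (C * (b + s) ^ k) :=
        mul_le_mul_of_nonneg_left (hbound s hs) (exp_pos _).le
    _ = C * ((b + s) ^ k * exp (-s)) := by ring

lemma integrableOn_exp_neg_mul_of_abs_le (hg : Continuous g)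
    (hbound : ∀ s, 0 ≤ s → |g s| ≤ C * (b + s) ^ k) :
    IntegrableOn (fun s => exp (-s) * g s) (Ioi 0) := by
  refine ((integrableOn_add_pow_mul_exp_neg b k).const_mul C).mono' (by fun_prop) ?_
  filter_upwards [ae_restrict_mem measurableSet_Ioi] with s hs
  exact norm_exp_neg_mul_le hbound (le_of_lt hs)

lemma tendsto_exp_neg_mul_of_abs_le (hbound : ∀ s, 0 ≤ s → |g s| ≤ C * (b + s) ^ k) :
    Tendsto (fun s => exp (-s) * g s) atTop (𝓝 0) := by
  refine squeeze_zero_norm' ?_ (by simpa using (tendsto_add_pow_mul_exp_neg b k).const_mul C)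
  filter_upwards [eventually_ge_atTop 0] with s hs
  exact norm_exp_neg_mul_le hbound hs

lemma integral_exp_neg_mul_deriv (hg : ∀ s, HasDerivAt g (g' s) s) (hg' : Continuous g')
    (hbound : ∀ s, 0 ≤ s → |g s| ≤ C * (b + s) ^ k)
    (hbound' : ∀ s, 0 ≤ s → |g' s| ≤ C' * (b + s) ^ k') :
    ∫ s in Ioi 0, exp (-s) * g' s = (∫ s in Ioi 0, exp (-s) * g s) - g 0 := by
  have hcont : Continuous g := continuous_iff_continuousAt.2 fun s => (hg s).continuousAt
  have hint := integrableOn_exp_neg_mul_of_abs_le hcont hbound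
  have hint' := integrableOn_exp_neg_mul_of_abs_le hg' hbound'
  have hderiv : ∀ s ∈ Set.Ici (0 : ℝ),
      HasDerivAt (fun s => exp (-s) * g s) (exp (-s) * g' s - exp (-s) * g s) s :=
    fun s _ => ((hasDerivAt_neg s).exp.mul (hg s)).congr_deriv (by ring)
  have hftc := integral_Ioi_of_hasDerivAt_of_tendsto' hderiv (hint'.sub hint)
    (tendsto_exp_neg_mul_of_abs_le hbound)
  rw [integral_sub hint' hint, neg_zero, exp_zero, one_mul] at hftc
  linarith

end ExpWeighted

noncomputable def expDoubleIntegral (f : ℝ → ℝ → ℝ) : ℝ :=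
  ∫ r in Ioi 0, ∫ s in Ioi 0, exp (-r - s) * f r s

section ExpDoubleIntegral

variable {f g F D : ℝ → ℝ → ℝ} {a C C' : ℝ} {k k' : ℕ}

lemma integrable_exp_neg_sub_mul_of_abs_le (hf : Continuous (uncurry f)) (ha : 0 ≤ a)
    (hbound : ∀ r s, 0 ≤ r → 0 ≤ s → |f r s| ≤ C * (a + r + s) ^ k) :
    Integrable (uncurry fun r s => exp (-r - s) * f r s) (μ₊.prod μ₊) := by
  refine (((integrableOn_add_pow_mul_exp_neg (a + 1) k).const_mul |C|).mul_prod
    (integrableOn_add_pow_mul_exp_neg 1 k)).mono' (by fun_prop) ?_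
  rw [Measure.prod_restrict, ae_restrict_iff' (measurableSet_Ioi.prod measurableSet_Ioi)]
  refine ae_of_all _ fun ⟨r, s⟩ ⟨hr, hs⟩ => ?_
  have hr : (0 : ℝ) ≤ r := le_of_lt hr
  have hs : (0 : ℝ) ≤ s := le_of_lt hs
  have hsplit : (a + r + s) ^ k ≤ (a + 1 + r) ^ k * (1 + s) ^ k := by
    rw [← mul_pow]
    exact pow_le_pow_left₀ (by positivity) (by nlinarith) k
  simp only [uncurry_apply_pair, norm_mul, norm_of_nonneg (exp_pos _).le, Real.norm_eq_abs,
    exp_neg_sub]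
  calc exp (-r) * exp (-s) * |f r s| ≤ exp (-r) * exp (-s) * (|C| * (a + r + s) ^ k) := by
        gcongr
        exact (hbound r s hr hs).trans (mul_le_mul_of_nonneg_right (le_abs_self C) (by positivity))
    _ ≤ exp (-r) * exp (-s) * (|C| * ((a + 1 + r) ^ k * (1 + s) ^ k)) := by gcongr
    _ = _ := by ring

lemma expDoubleIntegral_comm
    (hf : Integrable (uncurry fun r s => exp (-r - s) * f r s) (μ₊.prod μ₊)) :
    expDoubleIntegral (fun r s => f s r) = expDoubleIntegral f := by
  rw [expDoubleIntegral, expDoubleIntegral, integral_integral_swap hf]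
  refine setIntegral_congr_fun measurableSet_Ioi fun r _ =>
    setIntegral_congr_fun measurableSet_Ioi fun s _ => ?_
  ring_nf

lemma expDoubleIntegral_add
    (hf : Integrable (uncurry fun r s => exp (-r - s) * f r s) (μ₊.prod μ₊))
    (hg : Integrable (uncurry fun r s => exp (-r - s) * g r s) (μ₊.prod μ₊)) :
    expDoubleIntegral (fun r s => f r s + g r s) = expDoubleIntegral f + expDoubleIntegral g := by
  simp_rw [expDoubleIntegral, mul_add]
  exact integral_integral_add hf hg

lemma expDoubleIntegral_const_mul (c : ℝ) (f : ℝ → ℝ → ℝ) :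
    expDoubleIntegral (fun r s => c * f r s) = c * expDoubleIntegral f := by
  simp_rw [expDoubleIntegral, mul_left_comm _ c, integral_const_mul]

lemma expDoubleIntegral_of_hasDerivAt_right (ha : 0 ≤ a)
    (hF : Continuous (uncurry F)) (hD : Continuous (uncurry D))
    (hderiv : ∀ r s, HasDerivAt (F r) (D r s) s)
    (hFbound : ∀ r s, 0 ≤ r → 0 ≤ s → |F r s| ≤ C * (a + r + s) ^ k)
    (hDbound : ∀ r s, 0 ≤ r → 0 ≤ s → |D r s| ≤ C' * (a + r + s) ^ k') :
    expDoubleIntegral D = expDoubleIntegral F - ∫ r in Ioi 0, exp (-r) * F r 0 := by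
  have hinner : ∀ r ∈ Ioi (0 : ℝ), ∫ s in Ioi 0, exp (-r - s) * D r s =
      (∫ s in Ioi 0, exp (-r - s) * F r s) - exp (-r) * F r 0 := fun r hr => by
    simp_rw [exp_neg_sub, mul_assoc, integral_const_mul]
    rw [integral_exp_neg_mul_deriv (hderiv r) (hD.uncurry_left r) (hFbound r · (le_of_lt hr))
      (hDbound r · (le_of_lt hr)), mul_sub]
  have hboundary : ∀ r, 0 ≤ r → |F r 0| ≤ C * (a + r) ^ k := fun r hr => by
    simpa using hFbound r 0 hr le_rfl
  rw [expDoubleIntegral, setIntegral_congr_fun measurableSet_Ioi hinner]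
  exact integral_sub (integrable_exp_neg_sub_mul_of_abs_le hF ha hFbound).integral_prod_left
    (integrableOn_exp_neg_mul_of_abs_le (hF.uncurry_right 0) hboundary)

end ExpDoubleIntegral

lemma integral_exp_neg_mul_add_pow (t : ℝ) (m : ℕ) :
    ∫ r in Ioi 0, exp (-r) * (t + r) ^ m = exp t * upperGamma (m + 1) t := by
  have hshift := (measurePreserving_add_right volume t).setIntegral_preimage_emb
    (measurableEmbedding_addRight t) (fun u => u ^ (m : ℝ) * exp (-u)) (Ioi t)
  rw [preimage_add_const_Ioi, sub_self] at hshift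
  rw [upperGamma, add_sub_cancel_right, ← hshift, ← integral_const_mul]
  refine setIntegral_congr_fun measurableSet_Ioi fun r _ => ?_
  rw [rpow_natCast, neg_add, exp_add, exp_neg t, add_comm r]
  field_simp

section QuadAII

def quadAII (x r s : ℝ) : ℝ := 4 * x ^ 2 + 4 * x * (r + s) + (r - s) ^ 2

variable {x r s : ℝ}

lemma fAII_eq_expDoubleIntegral (N : ℕ) (x : ℝ) :
    fAII N x = expDoubleIntegral fun r s => quadAII x r s ^ N := rfl

lemma quadAII_comm (x r s : ℝ) : quadAII x r s = quadAII x s r := by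
  unfold quadAII; ring

lemma quadAII_zero_right (x r : ℝ) : quadAII x r 0 = (2 * x + r) ^ 2 := by
  unfold quadAII; ring

lemma hasDerivAt_quadAII_right (x r s : ℝ) :
    HasDerivAt (quadAII x r) (4 * x + 2 * (s - r)) s := by
  have h := (((hasDerivAt_id s).const_add r).const_mul (4 * x) |>.const_add (4 * x ^ 2)).add
    (((hasDerivAt_id s).const_sub r).pow 2)
  exact h.congr_deriv (by simp; ring)

lemma continuous_quadAII (x : ℝ) : Continuous (uncurry (quadAII x)) := by
  unfold quadAII; fun_prop

lemma abs_pow_quadAII_le (hr : 0 ≤ r) (hs : 0 ≤ s) (n : ℕ) :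
    |quadAII x r s ^ n| ≤ (2 * |x| + r + s) ^ (2 * n) := by
  have h : |quadAII x r s| ≤ (2 * |x| + r + s) ^ 2 := by
    unfold quadAII
    rw [abs_le]
    constructor <;>
      nlinarith [abs_nonneg x, le_abs_self x, neg_abs_le x, mul_nonneg hr hs, sq_abs x]
  rw [abs_pow, pow_mul]
  exact pow_le_pow_left₀ (abs_nonneg _) h n

lemma abs_deriv_quadAII_le (hr : 0 ≤ r) (hs : 0 ≤ s) :
    |4 * x + 2 * (s - r)| ≤ 2 * (2 * |x| + r + s) := by
  rw [abs_le]
  constructor <;> linarith [le_abs_self x, neg_abs_le x]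

end QuadAII

lemma fAII_succ (x : ℝ) (n : ℕ) :
    fAII (n + 1) x =
      (∫ r in Ioi 0, exp (-r) * (2 * x + r) ^ (2 * (n + 1))) + 4 * x * (n + 1) * fAII n x := by
  set D : ℝ → ℝ → ℝ := fun r s => (n + 1) * quadAII x r s ^ n * (4 * x + 2 * (s - r))
  have hD_cont : Continuous (uncurry D) := by
    have := continuous_quadAII x
    fun_prop
  have hD_bound : ∀ r s, 0 ≤ r → 0 ≤ s →
      |D r s| ≤ 2 * (n + 1) * (2 * |x| + r + s) ^ (2 * n + 1) := fun r s hr hs => by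
    rw [abs_mul, abs_mul, abs_of_nonneg (by positivity : (0 : ℝ) ≤ n + 1), pow_succ]
    calc (n + 1) * |quadAII x r s ^ n| * |4 * x + 2 * (s - r)|
        ≤ (n + 1) * (2 * |x| + r + s) ^ (2 * n) * (2 * (2 * |x| + r + s)) := by
          gcongr
          exacts [abs_pow_quadAII_le hr hs n, abs_deriv_quadAII_le hr hs]
      _ = _ := by ring
  have ha : (0 : ℝ) ≤ 2 * |x| := by positivity
  have hD_int := integrable_exp_neg_sub_mul_of_abs_le hD_cont ha hD_bound
  have hD_swap_int := integrable_exp_neg_sub_mul_of_abs_le (f := fun r s => D s r)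
    (hD_cont.comp continuous_swap) ha fun r s hr hs => by
      simpa only [add_right_comm _ s r] using hD_bound s r hs hr
  have hparts : expDoubleIntegral D =
      fAII (n + 1) x - ∫ r in Ioi 0, exp (-r) * (2 * x + r) ^ (2 * (n + 1)) := by
    have hderiv : ∀ r s, HasDerivAt (fun s => quadAII x r s ^ (n + 1)) (D r s) s :=
      fun r s => ((hasDerivAt_quadAII_right x r s).pow (n + 1)).congr_deriv (by push_cast; ring)
    simp_rw [fAII_eq_expDoubleIntegral, pow_mul, ← quadAII_zero_right]
    exact expDoubleIntegral_of_hasDerivAt_right (C := 1) ha ((continuous_quadAII x).pow (n + 1))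
      hD_cont hderiv (fun r s hr hs => by simpa using abs_pow_quadAII_le hr hs (n + 1)) hD_bound
  have hsym : expDoubleIntegral (fun r s => D r s + D s r) = 8 * x * (n + 1) * fAII n x := by
    rw [fAII_eq_expDoubleIntegral, ← expDoubleIntegral_const_mul]
    congr with r s
    simp only [D, quadAII_comm x s r]
    ring
  rw [expDoubleIntegral_add hD_int hD_swap_int, expDoubleIntegral_comm hD_int] at hsym
  linarith

lemma fAII_zero (x : ℝ) : fAII 0 x = 1 := by
  simp only [fAII, pow_zero, mul_one, exp_neg_sub, integral_const_mul,
    integral_exp_neg_Ioi_zero]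

lemma eq_sum_factorial_div_of_rec {K : Type*} [Field K] [CharZero K] {f I : ℕ → K} {c : K}
    (h0 : f 0 = I 0) (hsucc : ∀ n, f (n + 1) = I (n + 1) + c * (n + 1) * f n) (N : ℕ) :
    f N = ∑ j ∈ range (N + 1), (N.factorial / j.factorial : K) * c ^ (N - j) * I j := by
  induction N with
  | zero => simp [h0]
  | succ N ih =>
    rw [sum_range_succ, hsucc, ih, mul_sum, Nat.sub_self, pow_zero,
      div_self (Nat.cast_ne_zero.2 (Nat.factorial_ne_zero _)), one_mul, one_mul, add_comm]
    congr 1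
    refine sum_congr rfl fun j hj => ?_
    rw [Nat.succ_sub (mem_range_succ_iff.1 hj), pow_succ, Nat.factorial_succ]
    push_cast
    ring

theorem statement3_general (N : ℕ) (x : ℝ) :
    fAII N x = Real.exp (2 * x) *
      ∑ j ∈ Finset.range (N + 1),
        ((Nat.factorial N : ℝ) / (Nat.factorial j : ℝ)) * (4 * x) ^ (N - j) *
          upperGamma (2 * j + 1) (2 * x) := by
  have hI : ∀ j : ℕ, ∫ r in Ioi 0, exp (-r) * (2 * x + r) ^ (2 * j) =
      exp (2 * x) * upperGamma (2 * j + 1) (2 * x) := fun j => by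
    rw [integral_exp_neg_mul_add_pow]; push_cast; rfl
  rw [mul_sum]
  refine (eq_sum_factorial_div_of_rec (f := fun n => fAII n x)
    (I := fun j => exp (2 * x) * upperGamma (2 * j + 1) (2 * x)) (c := 4 * x) ?_ ?_ N).trans
    (sum_congr rfl fun j _ => by ring)
  · rw [fAII_zero, ← hI 0]
    simp_rw [mul_zero, pow_zero, mul_one]
    exact integral_exp_neg_Ioi_zero.symm
  · intro n
    rw [fAII_succ, hI]

/-- Summation formula: `f_N(x) = e^{2x} ∑_{j=0}^N (N!/j!) (4x)^{N−j} Γ(2j+1, 2x)`. -/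
theorem statement3 (N : ℕ) (hN : 1 ≤ N) (x : ℝ) (hx : 0 ≤ x) :
    fAII N x = Real.exp (2 * x) *
      ∑ j ∈ Finset.range (N + 1),
        ((Nat.factorial N : ℝ) / (Nat.factorial j : ℝ)) * (4 * x) ^ (N - j) *
          upperGamma (2 * j + 1) (2 * x) :=
  statement3_general N x
end

section
/- For real r ≥ 0 with r ≠ 1, the global limit of the rescaled pair of characteristic polynomials in the complex Ginibre ensemble (class A) holds: lim_{N→∞} e^{−N r²} · E_N(N r²) = 1 if 0 ≤ r < 1, and = 0 if r > 1. -/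
open Filter Finset

/-- The real truncated exponential `E_n(x) = ∑_{j=0}^n x^j/j!`. -/
noncomputable def truncExpR (n : ℕ) (x : ℝ) : ℝ :=
  ∑ j ∈ Finset.range (n + 1), x ^ j / (Nat.factorial j : ℝ)

lemma aux_pow_div_factorial_le_exp {x : ℝ} (hx : 0 ≤ x) (n : ℕ) :
    x ^ n / (Nat.factorial n : ℝ) ≤ Real.exp x := by
  calc x ^ n / (Nat.factorial n : ℝ)
      ≤ ∑ i ∈ Finset.range (n + 1), x ^ i / (Nat.factorial i : ℝ) :=
        Finset.single_le_sum (f := fun i => x ^ i / (Nat.factorial i : ℝ))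
          (fun i _ => by positivity) (Finset.self_mem_range_succ n)
    _ ≤ Real.exp x := Real.sum_le_exp_of_nonneg hx _

/-- `x^N / N! ≤ (x e / N)^N` for `N ≥ 1`, `x ≥ 0`. -/
lemma aux_pow_div_factorial_le {x : ℝ} (hx : 0 ≤ x) (N : ℕ) (hN : 1 ≤ N) :
    x ^ N / (Nat.factorial N : ℝ) ≤ (x * Real.exp 1 / N) ^ N := by
  have hN0 : (0:ℝ) < N := by exact_mod_cast hN
  have h1 : (N:ℝ) ^ N ≤ Real.exp 1 ^ N * (Nat.factorial N : ℝ) := by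
    have h := aux_pow_div_factorial_le_exp (x := (N:ℝ)) (by positivity) N
    rw [div_le_iff₀ (by positivity)] at h
    calc (N:ℝ) ^ N ≤ Real.exp N * (Nat.factorial N : ℝ) := h
      _ = Real.exp 1 ^ N * (Nat.factorial N : ℝ) := by
          rw [← Real.exp_nat_mul, mul_one]
  rw [div_pow, mul_pow, div_le_div_iff₀ (by positivity) (by positivity)]
  calc x ^ N * (N:ℝ) ^ N ≤ x ^ N * (Real.exp 1 ^ N * (Nat.factorial N : ℝ)) := by
        exact mul_le_mul_of_nonneg_left h1 (by positivity)
    _ = x ^ N * Real.exp 1 ^ N * (Nat.factorial N : ℝ) := by ring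

/-- terms increase up to `N` when `x ≥ N`. -/
lemma aux_terms_mono {x : ℝ} {N : ℕ} (hx : (N:ℝ) ≤ x) :
    ∀ j ≤ N, x ^ j / (Nat.factorial j : ℝ) ≤ x ^ N / (Nat.factorial N : ℝ) := by
  have hx0 : 0 ≤ x := le_trans (by positivity) hx
  intro j hj
  have key : ∀ d : ℕ, j + d ≤ N →
      x ^ j / (Nat.factorial j : ℝ) ≤ x ^ (j + d) / (Nat.factorial (j + d) : ℝ) := by
    intro d
    induction d with
    | zero => intro _; simp
    | succ d ih =>
      intro hd
      have hd' : j + d ≤ N := by omega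
      refine (ih hd').trans ?_
      have hxge : ((j + d + 1 : ℕ) : ℝ) ≤ x := by
        refine le_trans ?_ hx
        exact_mod_cast hd
      rw [div_le_div_iff₀ (by positivity) (by positivity),
        show j + (d + 1) = j + d + 1 from rfl, Nat.factorial_succ, pow_succ]
      push_cast
      push_cast at hxge
      nlinarith [mul_nonneg (mul_nonneg (pow_nonneg hx0 (j + d))
        ((Nat.cast_pos (α := ℝ)).2 (Nat.factorial_pos (j + d))).le) (sub_nonneg.2 hxge)]
  have := key (N - j) (by omega)
  rwa [Nat.add_sub_cancel' hj] at this

lemma aux_exp_eq_tsum (x : ℝ) : Real.exp x = ∑' n : ℕ, x ^ n / (Nat.factorial n : ℝ) := by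
  rw [Real.exp_eq_exp_ℝ, NormedSpace.exp_eq_tsum_div]

set_option maxHeartbeats 1000000 in
/-- Geometric tail bound for the exponential series. -/
lemma aux_tail_bound {x : ℝ} (hx : 0 ≤ x) (N : ℕ) (hq : x / (N + 2) < 1) :
    Real.exp x - truncExpR N x
      ≤ x ^ (N + 1) / (Nat.factorial (N + 1) : ℝ) * (1 - x / (N + 2))⁻¹ := by
  have hsum : Summable (fun j : ℕ => x ^ j / (Nat.factorial j : ℝ)) :=
    Real.summable_pow_div_factorial x
  have h0 := Summable.sum_add_tsum_nat_add (f := fun j => x ^ j / (Nat.factorial j : ℝ)) (N + 1) hsum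
  have htail : Real.exp x - truncExpR N x
      = ∑' k : ℕ, x ^ (N + 1 + k) / (Nat.factorial (N + 1 + k) : ℝ) := by
    rw [aux_exp_eq_tsum, truncExpR, ← h0, add_sub_cancel_left]
    exact tsum_congr fun i => by rw [add_comm i (N + 1)]
  rw [htail]
  have hq0 : 0 ≤ x / (N + 2) := by positivity
  have hterm : ∀ k : ℕ, x ^ (N + 1 + k) / (Nat.factorial (N + 1 + k) : ℝ)
      ≤ x ^ (N + 1) / (Nat.factorial (N + 1) : ℝ) * (x / (N + 2)) ^ k := by
    intro k
    have hfac : ((Nat.factorial (N + 1) : ℝ) * ((N:ℝ) + 2) ^ k)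
        ≤ (Nat.factorial (N + 1 + k) : ℝ) := by
      have h := Nat.factorial_mul_pow_le_factorial (m := N + 1) (n := k)
      have h2 : ((Nat.factorial (N + 1) * (N + 2) ^ k : ℕ) : ℝ)
          ≤ ((Nat.factorial (N + 1 + k) : ℕ) : ℝ) := by exact_mod_cast h
      push_cast at h2
      convert h2 using 3 <;> push_cast <;> ring
    have hre : x ^ (N + 1) / (Nat.factorial (N + 1) : ℝ) * (x / ((N:ℝ) + 2)) ^ k
        = x ^ (N + 1) * x ^ k / ((Nat.factorial (N + 1) : ℝ) * ((N:ℝ) + 2) ^ k) := by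
      rw [div_pow, div_mul_div_comm]
    rw [hre, pow_add, div_le_div_iff₀ (by positivity) (by positivity)]
    calc x ^ (N + 1) * x ^ k * ((Nat.factorial (N + 1) : ℝ) * ((N:ℝ) + 2) ^ k)
        ≤ x ^ (N + 1) * x ^ k * (Nat.factorial (N + 1 + k) : ℝ) :=
          mul_le_mul_of_nonneg_left hfac (by positivity)
      _ = x ^ (N + 1) * x ^ k * (Nat.factorial (N + 1 + k) : ℝ) := by ring
  have hgsum : Summable (fun k : ℕ =>
      x ^ (N + 1) / (Nat.factorial (N + 1) : ℝ) * (x / (N + 2)) ^ k) :=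
    (summable_geometric_of_lt_one hq0 hq).mul_left _
  have hs1 : Summable (fun k : ℕ => x ^ (N + 1 + k) / (Nat.factorial (N + 1 + k) : ℝ)) := by
    have h := (summable_nat_add_iff
      (f := fun j : ℕ => x ^ j / (Nat.factorial j : ℝ)) (N + 1)).2 hsum
    exact h.congr fun k => by rw [add_comm k (N + 1)]
  calc ∑' k : ℕ, x ^ (N + 1 + k) / (Nat.factorial (N + 1 + k) : ℝ)
      ≤ ∑' k : ℕ, x ^ (N + 1) / (Nat.factorial (N + 1) : ℝ) * (x / (N + 2)) ^ k :=
        Summable.tsum_le_tsum hterm hs1 hgsum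
    _ = x ^ (N + 1) / (Nat.factorial (N + 1) : ℝ) * (1 - x / (N + 2))⁻¹ := by
        rw [tsum_mul_left, tsum_geometric_of_lt_one hq0 hq]

/-- Global limit for class A (complex Ginibre): for `r ≥ 0`, `r ≠ 1`,
`e^{−N r²} E_N(N r²)` converges to `1` for `r < 1` and to `0` for `r > 1`. -/
theorem statement5 (r : ℝ) (hr : 0 ≤ r) (hr1 : r ≠ 1) :
    Tendsto (fun N : ℕ => Real.exp (-(N * r ^ 2)) * truncExpR N (N * r ^ 2))
      atTop (nhds (if r < 1 then 1 else 0)) := by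
  set t : ℝ := r ^ 2 with ht
  have ht0 : 0 ≤ t := by positivity
  -- c = t e^{1-t} < 1 for t ≠ 1
  set c : ℝ := t * Real.exp (1 - t) with hc
  have hc0 : 0 ≤ c := by positivity
  have ht1 : t ≠ 1 := by
    intro h
    apply hr1
    nlinarith [sq_nonneg (r - 1)]
  have hclt : c < 1 := by
    have h := Real.add_one_lt_exp (x := t - 1) (by intro h; apply ht1; linarith)
    have h2 : t < Real.exp (t - 1) := by linarith
    have h3 : c < Real.exp (t - 1) * Real.exp (1 - t) := by
      rw [hc]
      exact mul_lt_mul_of_pos_right h2 (Real.exp_pos _)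
    rwa [← Real.exp_add, show t - 1 + (1 - t) = 0 by ring, Real.exp_zero] at h3
  have hlam0 : ∀ N : ℕ, (0:ℝ) ≤ N * t := fun N => by positivity
  by_cases hlt : r < 1
  · -- t < 1 case : limit 1
    have htlt : t < 1 := by nlinarith
    rw [if_pos hlt]
    -- upper bound: ≤ 1
    have hub : ∀ N : ℕ, Real.exp (-(N * t)) * truncExpR N (N * t) ≤ 1 := by
      intro N
      have : truncExpR N (N * t) ≤ Real.exp (N * t) :=
        Real.sum_le_exp_of_nonneg (hlam0 N) _
      calc Real.exp (-(N * t)) * truncExpR N (N * t)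
          ≤ Real.exp (-(N * t)) * Real.exp (N * t) :=
            mul_le_mul_of_nonneg_left this (Real.exp_pos _).le
        _ = 1 := by rw [← Real.exp_add]; simp
    -- lower bound: ≥ 1 - b N with b N → 0
    set b : ℕ → ℝ := fun N => (1 - t)⁻¹ * (t * Real.exp 1) * c ^ N with hb
    have hbtend : Tendsto b atTop (nhds 0) := by
      have := (tendsto_pow_atTop_nhds_zero_of_lt_one hc0 hclt).const_mul
        ((1 - t)⁻¹ * (t * Real.exp 1))
      simpa using this
    have hlb : ∀ N : ℕ, 1 - b N ≤ Real.exp (-(N * t)) * truncExpR N (N * t) := by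
      intro N
      have hq : (N : ℝ) * t / (N + 2) < 1 := by
        rw [div_lt_one (by positivity)]
        nlinarith [Nat.cast_nonneg (α := ℝ) N]
      have htail := aux_tail_bound (hlam0 N) N hq
      -- e^{-λ} * tailbound ≤ b N
      have hqle : (1 - (N : ℝ) * t / (N + 2))⁻¹ ≤ (1 - t)⁻¹ := by
        apply inv_anti₀ (by linarith)
        have : (N : ℝ) * t / (N + 2) ≤ t := by
          rw [div_le_iff₀ (by positivity)]
          nlinarith [Nat.cast_nonneg (α := ℝ) N]
        linarith
      have hkey : Real.exp (-(N * t)) * (((N : ℝ) * t) ^ (N + 1) / (Nat.factorial (N + 1) : ℝ))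
          ≤ t * Real.exp 1 * c ^ N := by
        have hB := aux_pow_div_factorial_le (x := (N : ℝ) * t) (hlam0 N) (N + 1) (by omega)
        have hBle : ((N : ℝ) * t * Real.exp 1 / (N + 1 : ℕ)) ^ (N + 1)
            ≤ (t * Real.exp 1) ^ (N + 1) := by
          apply pow_le_pow_left₀ (by positivity)
          rw [div_le_iff₀ (by positivity)]
          push_cast
          nlinarith [Real.exp_pos 1, Nat.cast_nonneg (α := ℝ) N]
        have h1 : ((N : ℝ) * t) ^ (N + 1) / (Nat.factorial (N + 1) : ℝ)
            ≤ (t * Real.exp 1) ^ (N + 1) := hB.trans hBle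
        have h2 : Real.exp (-(N * t)) * (t * Real.exp 1) ^ (N + 1)
            = t * Real.exp 1 * c ^ N := by
          rw [hc, mul_pow, mul_pow, pow_succ, pow_succ]
          rw [show Real.exp (1 - t) = Real.exp 1 * Real.exp (-t) by
            rw [← Real.exp_add]; ring_nf]
          rw [mul_pow, show Real.exp (-t) ^ N = Real.exp (-(N * t)) by
            rw [← Real.exp_nat_mul]; ring_nf]
          ring
        calc Real.exp (-(N * t)) * (((N : ℝ) * t) ^ (N + 1) / (Nat.factorial (N + 1) : ℝ))
            ≤ Real.exp (-(N * t)) * (t * Real.exp 1) ^ (N + 1) :=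
              mul_le_mul_of_nonneg_left h1 (Real.exp_pos _).le
          _ = t * Real.exp 1 * c ^ N := h2
      have hgap : Real.exp (-(N * t)) * (Real.exp ((N : ℝ) * t) - truncExpR N ((N : ℝ) * t))
          ≤ b N := by
        calc Real.exp (-(N * t)) * (Real.exp ((N : ℝ) * t) - truncExpR N ((N : ℝ) * t))
            ≤ Real.exp (-(N * t)) * (((N : ℝ) * t) ^ (N + 1) / (Nat.factorial (N + 1) : ℝ)
                * (1 - (N : ℝ) * t / (N + 2))⁻¹) :=
              mul_le_mul_of_nonneg_left htail (Real.exp_pos _).le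
          _ ≤ (t * Real.exp 1 * c ^ N) * (1 - t)⁻¹ := by
              have hA : Real.exp (-(N * t)) * (((N : ℝ) * t) ^ (N + 1)
                  / (Nat.factorial (N + 1) : ℝ)) ≤ t * Real.exp 1 * c ^ N := hkey
              have hnn : (0:ℝ) ≤ Real.exp (-(N * t)) * (((N : ℝ) * t) ^ (N + 1)
                  / (Nat.factorial (N + 1) : ℝ)) := by positivity
              have hinv0 : (0:ℝ) ≤ (1 - (N : ℝ) * t / (N + 2))⁻¹ := by
                apply inv_nonneg.2
                have : (N : ℝ) * t / (N + 2) < 1 := hq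
                linarith
              calc Real.exp (-(N * t)) * (((N : ℝ) * t) ^ (N + 1) / (Nat.factorial (N + 1) : ℝ)
                    * (1 - (N : ℝ) * t / (N + 2))⁻¹)
                  = (Real.exp (-(N * t)) * (((N : ℝ) * t) ^ (N + 1)
                    / (Nat.factorial (N + 1) : ℝ))) * (1 - (N : ℝ) * t / (N + 2))⁻¹ := by ring
                _ ≤ (t * Real.exp 1 * c ^ N) * (1 - t)⁻¹ := by
                    apply mul_le_mul hA hqle hinv0 (by positivity)
          _ = b N := by rw [hb]; ring
      have hexp1 : Real.exp (-(N * t)) * Real.exp ((N : ℝ) * t) = 1 := by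
        rw [← Real.exp_add]; simp
      nlinarith [hgap, hexp1]
    have h1 : Tendsto (fun N : ℕ => 1 - b N) atTop (nhds 1) := by
      have := hbtend.const_sub 1
      simpa using this
    exact tendsto_of_tendsto_of_tendsto_of_le_of_le h1 tendsto_const_nhds hlb hub
  · -- t > 1 case : limit 0
    have htgt : 1 < t := by
      rcases lt_or_eq_of_le (not_lt.1 hlt) with h | h
      · nlinarith
      · exact absurd h.symm hr1
    rw [if_neg hlt]
    have hub : ∀ N : ℕ, 1 ≤ N →
        Real.exp (-(N * t)) * truncExpR N (N * t) ≤ (N + 1 : ℝ) * c ^ N := by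
      intro N hN
      have hNx : (N : ℝ) ≤ (N : ℝ) * t := by nlinarith [Nat.cast_nonneg (α := ℝ) N]
      have hmax : truncExpR N ((N : ℝ) * t)
          ≤ (N + 1 : ℝ) * (((N : ℝ) * t) ^ N / (Nat.factorial N : ℝ)) := by
        rw [truncExpR]
        calc ∑ j ∈ Finset.range (N + 1), ((N : ℝ) * t) ^ j / (Nat.factorial j : ℝ)
            ≤ ∑ j ∈ Finset.range (N + 1), ((N : ℝ) * t) ^ N / (Nat.factorial N : ℝ) := by
              apply Finset.sum_le_sum
              intro j hj
              exact aux_terms_mono hNx j (Nat.lt_succ_iff.1 (Finset.mem_range.1 hj))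
          _ = (N + 1 : ℝ) * (((N : ℝ) * t) ^ N / (Nat.factorial N : ℝ)) := by
              rw [Finset.sum_const, Finset.card_range]
              push_cast
              ring
      have hB := aux_pow_div_factorial_le (x := (N : ℝ) * t) (hlam0 N) N hN
      have hN0 : (0:ℝ) < N := by exact_mod_cast hN
      have hBeq : ((N : ℝ) * t * Real.exp 1 / N) ^ N = (t * Real.exp 1) ^ N := by
        congr 1
        field_simp
      have h1 : ((N : ℝ) * t) ^ N / (Nat.factorial N : ℝ) ≤ (t * Real.exp 1) ^ N := by
        rw [← hBeq]; exact hB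
      have h2 : Real.exp (-(N * t)) * (t * Real.exp 1) ^ N = c ^ N := by
        rw [hc, mul_pow, mul_pow,
          show Real.exp (1 - t) = Real.exp 1 * Real.exp (-t) by
            rw [← Real.exp_add]; ring_nf,
          mul_pow, show Real.exp (-t) ^ N = Real.exp (-(N * t)) by
            rw [← Real.exp_nat_mul]; ring_nf]
        ring
      calc Real.exp (-(N * t)) * truncExpR N ((N : ℝ) * t)
          ≤ Real.exp (-(N * t)) * ((N + 1 : ℝ) * (((N : ℝ) * t) ^ N / (Nat.factorial N : ℝ))) :=
            mul_le_mul_of_nonneg_left hmax (Real.exp_pos _).le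
        _ ≤ Real.exp (-(N * t)) * ((N + 1 : ℝ) * (t * Real.exp 1) ^ N) := by
            apply mul_le_mul_of_nonneg_left _ (Real.exp_pos _).le
            apply mul_le_mul_of_nonneg_left h1 (by positivity)
        _ = (N + 1 : ℝ) * (Real.exp (-(N * t)) * (t * Real.exp 1) ^ N) := by ring
        _ = (N + 1 : ℝ) * c ^ N := by rw [h2]
    have hlb : ∀ N : ℕ, 0 ≤ Real.exp (-(N * t)) * truncExpR N (N * t) := by
      intro N
      have : 0 ≤ truncExpR N ((N : ℝ) * t) := by
        rw [truncExpR]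
        apply Finset.sum_nonneg
        intro j _
        positivity
      positivity
    have hbtend : Tendsto (fun N : ℕ => (N + 1 : ℝ) * c ^ N) atTop (nhds 0) := by
      have h1 := tendsto_pow_const_mul_const_pow_of_lt_one 1 hc0 hclt
      have h2 := tendsto_pow_atTop_nhds_zero_of_lt_one hc0 hclt
      have := h1.add h2
      simpa [add_mul, pow_one] using this
    apply tendsto_of_tendsto_of_tendsto_of_le_of_le' tendsto_const_nhds hbtend
    · exact Eventually.of_forall hlb
    · filter_upwards [eventually_ge_atTop 1] with N hN
      exact hub N hN
end

section
/- For real r ≥ 0 with r ≠ 1, the global limit of the rescaled pair of characteristic polynomials in the Gaussian complex symmetric ensemble (class AI†) holds: lim_{N→∞} e^{−N r²} · [E_N(N r²) − (N r²/(N+1)) · E_{N−1}(N r²)] = 1 − r² if 0 ≤ r < 1, and = 0 if r > 1. -/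
open Filter Finset

lemma factorial_le_pow_aux (j k : ℕ) : (j + k).factorial ≤ j.factorial * (j + k) ^ k := by
  induction k with
  | zero => simp
  | succ k ih =>
      have h1 : (j + (k+1)).factorial = (j + k + 1) * (j + k).factorial := by
        rw [← Nat.add_assoc]; exact Nat.factorial_succ _
      rw [h1]
      calc (j + k + 1) * (j + k).factorial ≤ (j + k + 1) * (j.factorial * (j + k) ^ k) :=
            Nat.mul_le_mul_left _ ih
        _ ≤ (j + (k+1)) * (j.factorial * (j + (k+1)) ^ k) := by
            apply Nat.mul_le_mul (by omega)
            exact Nat.mul_le_mul_left _ (Nat.pow_le_pow_left (by omega) _)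
        _ = j.factorial * (j + (k+1)) ^ (k+1) := by ring

lemma exp_eq_tsum_real (y : ℝ) : Real.exp y = ∑' n : ℕ, y ^ n / n.factorial := by
  rw [Real.exp_eq_exp_ℝ, NormedSpace.exp_eq_tsum_div]

lemma tail_bound {x : ℝ} (hx0 : 0 ≤ x) (hx1 : x < 1) (N : ℕ) (hN : 1 ≤ N) :
    Real.exp ((N : ℝ) * x) ≤ truncExpR (N - 1) ((N : ℝ) * x)
      + ((N : ℝ) * x) ^ N / N.factorial * (1 - x)⁻¹ := by
  set y : ℝ := (N : ℝ) * x with hy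
  have hy0 : 0 ≤ y := mul_nonneg (Nat.cast_nonneg _) hx0
  have hsum : Summable fun n : ℕ => y ^ n / n.factorial := Real.summable_pow_div_factorial y
  have hsplit := Summable.sum_add_tsum_nat_add (f := fun n : ℕ => y ^ n / n.factorial) N hsum
  have htrunc : truncExpR (N - 1) y = ∑ j ∈ Finset.range N, y ^ j / j.factorial := by
    have h : N - 1 + 1 = N := by omega
    rw [truncExpR, h]
  -- bound the tail tsum
  have hterm : ∀ k : ℕ, y ^ (k + N) / (k + N).factorial ≤ y ^ N / N.factorial * x ^ k := by
    intro k
    have hfac : (N.factorial : ℝ) * (N : ℝ) ^ k ≤ ((k + N).factorial : ℝ) := by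
      have := Nat.factorial_mul_pow_le_factorial (m := N) (n := k)
      have h2 : N.factorial * N ^ k ≤ N.factorial * (N + 1) ^ k :=
        Nat.mul_le_mul_left _ (Nat.pow_le_pow_left (by omega) _)
      have h3 : N.factorial * N ^ k ≤ (N + k).factorial := h2.trans this
      calc (N.factorial : ℝ) * (N : ℝ) ^ k = ((N.factorial * N ^ k : ℕ) : ℝ) := by push_cast; ring
        _ ≤ ((N + k).factorial : ℝ) := Nat.cast_le.mpr h3
        _ = ((k + N).factorial : ℝ) := by rw [Nat.add_comm]
    have hyk : y ^ (k + N) = y ^ N * ((N : ℝ) ^ k * x ^ k) := by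
      rw [hy]; ring
    have hNfac : (0 : ℝ) < N.factorial := by positivity
    have hkfac : (0 : ℝ) < (k + N).factorial := by positivity
    rw [div_mul_eq_mul_div, div_le_div_iff₀ hkfac hNfac]
    calc y ^ (k + N) * (N.factorial : ℝ) = (y ^ N * x ^ k) * ((N.factorial : ℝ) * (N : ℝ) ^ k) := by
          rw [hyk]; ring
      _ ≤ (y ^ N * x ^ k) * ((k + N).factorial : ℝ) := by
          apply mul_le_mul_of_nonneg_left hfac
          positivity
  have hsummino : Summable fun k : ℕ => y ^ (k + N) / (k + N).factorial :=
    ((summable_nat_add_iff N).mpr hsum)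
  have hgeom : Summable fun k : ℕ => y ^ N / N.factorial * x ^ k :=
    (summable_geometric_of_lt_one hx0 hx1).mul_left _
  have htail : (∑' k : ℕ, y ^ (k + N) / (k + N).factorial)
      ≤ y ^ N / N.factorial * (1 - x)⁻¹ := by
    calc (∑' k : ℕ, y ^ (k + N) / (k + N).factorial)
        ≤ ∑' k : ℕ, y ^ N / N.factorial * x ^ k := Summable.tsum_le_tsum hterm hsummino hgeom
      _ = y ^ N / N.factorial * ∑' k : ℕ, x ^ k := tsum_mul_left
      _ = y ^ N / N.factorial * (1 - x)⁻¹ := by rw [tsum_geometric_of_lt_one hx0 hx1]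
  rw [exp_eq_tsum_real, ← hsplit, htrunc]
  linarith

lemma T_bound {x : ℝ} (hx0 : 0 ≤ x) (N : ℕ) :
    Real.exp (-((N : ℝ) * x)) * (((N : ℝ) * x) ^ N / N.factorial)
      ≤ (x * Real.exp (1 - x)) ^ N := by
  have h1 : ((N : ℝ)) ^ N / N.factorial ≤ Real.exp N :=
    Real.pow_div_factorial_le_exp (x := (N:ℝ)) (Nat.cast_nonneg N) N
  have hE : (0:ℝ) < Real.exp (-((N : ℝ) * x)) := Real.exp_pos _
  calc Real.exp (-((N : ℝ) * x)) * (((N : ℝ) * x) ^ N / N.factorial)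
      = Real.exp (-((N : ℝ) * x)) * x ^ N * ((N:ℝ) ^ N / N.factorial) := by
        rw [mul_pow]; ring
    _ ≤ Real.exp (-((N : ℝ) * x)) * x ^ N * Real.exp N := by
        apply mul_le_mul_of_nonneg_left h1
        positivity
    _ = (x * Real.exp (1 - x)) ^ N := by
        rw [mul_pow, ← Real.exp_nat_mul, mul_right_comm, ← Real.exp_add, mul_comm]
        congr 1
        ring_nf

lemma trunc_bound_gt {x : ℝ} (hx1 : 1 < x) (N : ℕ) :
    truncExpR N ((N : ℝ) * x) ≤ ((N : ℝ) * x) ^ N / N.factorial * (1 - x⁻¹)⁻¹ := by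
  have hx0 : (0:ℝ) < x := lt_trans one_pos hx1
  have hxi0 : 0 ≤ x⁻¹ := by positivity
  have hxi1 : x⁻¹ < 1 := inv_lt_one_of_one_lt₀ hx1
  set y : ℝ := (N : ℝ) * x with hy
  have hterm : ∀ j ∈ Finset.range (N + 1),
      y ^ j / j.factorial ≤ y ^ N / N.factorial * (x⁻¹) ^ (N - j) := by
    intro j hj
    rw [Finset.mem_range] at hj
    have hjN : j ≤ N := by omega
    have hfacN : (N.factorial : ℝ) ≤ (j.factorial : ℝ) * (N : ℝ) ^ (N - j) := by
      have h := factorial_le_pow_aux j (N - j)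
      have h2 : j + (N - j) = N := by omega
      rw [h2] at h
      exact_mod_cast h
    have hjfac : (0 : ℝ) < j.factorial := by positivity
    have hNfac : (0 : ℝ) < N.factorial := by positivity
    rw [div_mul_eq_mul_div, div_le_div_iff₀ hjfac hNfac]
    have hyj : y ^ N = y ^ j * ((N:ℝ) * x) ^ (N - j) := by
      rw [hy, ← pow_add]
      congr 1
      omega
    calc y ^ j * (N.factorial : ℝ)
        ≤ y ^ j * ((j.factorial : ℝ) * (N : ℝ) ^ (N - j)) := by
          apply mul_le_mul_of_nonneg_left hfacN
          positivity
      _ = y ^ N * (x⁻¹) ^ (N - j) * (j.factorial : ℝ) := by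
          rw [hyj, mul_pow, inv_pow]
          field_simp
          ring
  calc truncExpR N y ≤ ∑ j ∈ Finset.range (N + 1), y ^ N / N.factorial * (x⁻¹) ^ (N - j) :=
        Finset.sum_le_sum hterm
    _ = y ^ N / N.factorial * ∑ j ∈ Finset.range (N + 1), (x⁻¹) ^ (N - j) := by
        rw [Finset.mul_sum]
    _ = y ^ N / N.factorial * ∑ j ∈ Finset.range (N + 1), (x⁻¹) ^ j := by
        congr 1
        rw [← Finset.sum_range_reflect]
        apply Finset.sum_congr rfl
        intro j hj
        rw [Finset.mem_range] at hj
        congr 1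
        omega
    _ ≤ y ^ N / N.factorial * (1 - x⁻¹)⁻¹ := by
        apply mul_le_mul_of_nonneg_left _ (by positivity)
        have hs : Summable fun j : ℕ => (x⁻¹) ^ j := summable_geometric_of_lt_one hxi0 hxi1
        calc ∑ j ∈ Finset.range (N + 1), (x⁻¹) ^ j ≤ ∑' j : ℕ, (x⁻¹) ^ j :=
              Summable.sum_le_tsum _ (fun j _ => by positivity) hs
          _ = (1 - x⁻¹)⁻¹ := tsum_geometric_of_lt_one hxi0 hxi1

/-- Global limit for class AI† (complex symmetric): for `r ≥ 0`, `r ≠ 1`,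
`e^{−N r²} [E_N(N r²) − (N r²/(N+1)) E_{N−1}(N r²)]` converges to `1 − r²` for `r < 1`
and to `0` for `r > 1`. -/
theorem statement6 (r : ℝ) (hr : 0 ≤ r) (hr1 : r ≠ 1) :
    Tendsto (fun N : ℕ => Real.exp (-(N * r ^ 2)) *
        (truncExpR N (N * r ^ 2) -
          (N * r ^ 2 / ((N : ℝ) + 1)) * truncExpR (N - 1) (N * r ^ 2)))
      atTop (nhds (if r < 1 then 1 - r ^ 2 else 0)) := by
  set x : ℝ := r ^ 2 with hxdef
  have hx0 : 0 ≤ x := sq_nonneg r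
  set c : ℝ := x * Real.exp (1 - x) with hcdef
  have hc0 : 0 ≤ c := mul_nonneg hx0 (Real.exp_pos _).le
  have hxne1 : x ≠ 1 := by
    intro h
    apply hr1
    nlinarith [sq_nonneg (r - 1), sq_nonneg (r + 1)]
  have hc1 : c < 1 := by
    have h := Real.add_one_lt_exp (x := x - 1) (by intro h; apply hxne1; linarith)
    have hx_lt : x < Real.exp (x - 1) := by linarith
    have hEpos : 0 < Real.exp (1 - x) := Real.exp_pos _
    calc c = x * Real.exp (1 - x) := rfl
      _ < Real.exp (x - 1) * Real.exp (1 - x) := by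
          exact mul_lt_mul_of_pos_right hx_lt hEpos
      _ = 1 := by rw [← Real.exp_add]; norm_num
  -- the key term T N
  set T : ℕ → ℝ := fun N => Real.exp (-((N : ℝ) * x)) * (((N : ℝ) * x) ^ N / N.factorial)
    with hTdef
  have hT0 : ∀ N, 0 ≤ T N := by
    intro N
    have : (0:ℝ) ≤ ((N : ℝ) * x) ^ N / N.factorial := by positivity
    exact mul_nonneg (Real.exp_pos _).le this
  have hTtendsto : Tendsto T atTop (nhds 0) := by
    apply squeeze_zero hT0 (fun N => T_bound hx0 N)
    exact tendsto_pow_atTop_nhds_zero_of_lt_one hc0 hc1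
  -- the coefficient
  have hcoeff : Tendsto (fun N : ℕ => (N : ℝ) * x / ((N : ℝ) + 1)) atTop (nhds x) := by
    have h1 : Tendsto (fun N : ℕ => x * ((N : ℝ) / ((N : ℝ) + 1))) atTop (nhds (x * 1)) :=
      tendsto_const_nhds.mul (tendsto_natCast_div_add_atTop (1 : ℝ))
    rw [mul_one] at h1
    apply h1.congr
    intro n
    ring
  set A : ℕ → ℝ := fun N => Real.exp (-((N : ℝ) * x)) * truncExpR (N - 1) ((N : ℝ) * x)
    with hAdef
  have hA0 : ∀ N, 0 ≤ A N := by
    intro N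
    apply mul_nonneg (Real.exp_pos _).le
    apply Finset.sum_nonneg
    intro j _
    positivity
  have key : ∀ N : ℕ, 1 ≤ N →
      Real.exp (-((N : ℝ) * x)) *
        (truncExpR N ((N : ℝ) * x) -
          ((N : ℝ) * x / ((N : ℝ) + 1)) * truncExpR (N - 1) ((N : ℝ) * x))
      = (1 - (N : ℝ) * x / ((N : ℝ) + 1)) * A N + T N := by
    intro N hN
    have hsplit : truncExpR N ((N : ℝ) * x)
        = truncExpR (N - 1) ((N : ℝ) * x) + ((N : ℝ) * x) ^ N / N.factorial := by
      have h : N - 1 + 1 = N := by omega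
      rw [truncExpR, truncExpR, h, Finset.sum_range_succ]
    rw [hsplit, hAdef, hTdef]
    ring
  rcases lt_or_gt_of_ne hr1 with hrlt | hrgt
  · -- case r < 1
    have hx1 : x < 1 := by nlinarith
    rw [if_pos hrlt]
    -- A N → 1
    have hAle : ∀ N : ℕ, A N ≤ 1 := by
      intro N
      have h1 : truncExpR (N - 1) ((N : ℝ) * x) ≤ Real.exp ((N : ℝ) * x) :=
        Real.sum_le_exp_of_nonneg (mul_nonneg (Nat.cast_nonneg _) hx0) _
      calc A N ≤ Real.exp (-((N : ℝ) * x)) * Real.exp ((N : ℝ) * x) :=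
            mul_le_mul_of_nonneg_left h1 (Real.exp_pos _).le
        _ = 1 := by rw [← Real.exp_add]; norm_num
    have hAge : ∀ N : ℕ, 1 ≤ N → 1 - T N * (1 - x)⁻¹ ≤ A N := by
      intro N hN
      have h := tail_bound hx0 hx1 N hN
      have hE : 0 < Real.exp (-((N : ℝ) * x)) := Real.exp_pos _
      have h2 := mul_le_mul_of_nonneg_left h hE.le
      rw [← Real.exp_add] at h2
      simp only [neg_add_cancel, Real.exp_zero, mul_add] at h2
      have h3 : Real.exp (-((N : ℝ) * x)) * (((N : ℝ) * x) ^ N / ↑N.factorial * (1 - x)⁻¹)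
          = T N * (1 - x)⁻¹ := by rw [hTdef]; ring
      rw [h3] at h2
      rw [hAdef]
      dsimp only
      linarith
    have hAtendsto : Tendsto A atTop (nhds 1) := by
      have hlow : Tendsto (fun N => 1 - T N * (1 - x)⁻¹) atTop (nhds 1) := by
        have : Tendsto (fun N => T N * (1 - x)⁻¹) atTop (nhds 0) := by
          have := hTtendsto.mul_const (1 - x)⁻¹
          rwa [zero_mul] at this
        have h2 := tendsto_const_nhds.sub (f := fun _ : ℕ => (1:ℝ)) this
        rwa [sub_zero] at h2
      refine tendsto_of_tendsto_of_tendsto_of_le_of_le' hlow tendsto_const_nhds ?_ ?_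
      · filter_upwards [eventually_ge_atTop 1] with N hN using hAge N hN
      · filter_upwards with N using hAle N
    have hmain : Tendsto (fun N : ℕ => (1 - (N : ℝ) * x / ((N : ℝ) + 1)) * A N + T N)
        atTop (nhds ((1 - x) * 1 + 0)) :=
      ((tendsto_const_nhds.sub hcoeff).mul hAtendsto).add hTtendsto
    rw [mul_one, add_zero] at hmain
    apply hmain.congr'
    filter_upwards [eventually_ge_atTop 1] with N hN
    exact (key N hN).symm
  · -- case r > 1
    have hx1 : 1 < x := by nlinarith
    rw [if_neg (by linarith : ¬ r < 1)]
    set B : ℕ → ℝ := fun N => Real.exp (-((N : ℝ) * x)) * truncExpR N ((N : ℝ) * x) with hBdef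
    have hB0 : ∀ N, 0 ≤ B N := by
      intro N
      apply mul_nonneg (Real.exp_pos _).le
      apply Finset.sum_nonneg
      intro j _
      have : 0 ≤ (N:ℝ) * x := mul_nonneg (Nat.cast_nonneg _) hx0
      positivity
    have hBle : ∀ N, B N ≤ T N * (1 - x⁻¹)⁻¹ := by
      intro N
      have h := trunc_bound_gt hx1 N
      have hE : 0 < Real.exp (-((N : ℝ) * x)) := Real.exp_pos _
      calc B N ≤ Real.exp (-((N : ℝ) * x)) * (((N : ℝ) * x) ^ N / N.factorial * (1 - x⁻¹)⁻¹) :=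
            mul_le_mul_of_nonneg_left h hE.le
        _ = T N * (1 - x⁻¹)⁻¹ := by rw [hTdef]; ring
    have hBtendsto : Tendsto B atTop (nhds 0) := by
      apply squeeze_zero hB0 hBle
      have := hTtendsto.mul_const (1 - x⁻¹)⁻¹
      rwa [zero_mul] at this
    have hAleB : ∀ N, A N ≤ B N := by
      intro N
      apply mul_le_mul_of_nonneg_left _ (Real.exp_pos _).le
      apply Finset.sum_le_sum_of_subset_of_nonneg
      · exact Finset.range_subset_range.mpr (by omega)
      · intro j _ _
        have : 0 ≤ (N:ℝ) * x := mul_nonneg (Nat.cast_nonneg _) hx0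
        positivity
    have hAtendsto : Tendsto A atTop (nhds 0) := squeeze_zero hA0 hAleB hBtendsto
    have hmain : Tendsto (fun N : ℕ => B N - ((N : ℝ) * x / ((N : ℝ) + 1)) * A N)
        atTop (nhds (0 - x * 0)) := hBtendsto.sub (hcoeff.mul hAtendsto)
    rw [mul_zero, sub_zero] at hmain
    apply hmain.congr
    intro N
    rw [hBdef, hAdef]
    ring
end

section
/- Tail asymptotics of the class AII† edge limit: let D(y) := (1/2) · e^{−y²/2} · ∫_{y/√2}^∞ e^{v²} · erfc(√2·v) dv for y ∈ ℝ. Then lim_{y→+∞} √(8π) · y² · e^{y²} · D(y) = 1, and lim_{y→−∞} (−√2·y) · D(y) = 1. -/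
/-!
Put `u = y / √2`, so that `D(y) = ½ e^{-u²} F(u)` with `F(u) = ∫_u^∞ e^{v²} erfc(√2 v) dv` and
`F'(u) = -e^{u²} erfc(√2 u)`.

As `u → +∞`, both `F(u)` and `e^{-u²}/u²` tend to `0`, and L'Hôpital's rule reduces the first
limit to the classical `erfc t ~ e^{-t²}/(√π t)`, itself a `0/0` L'Hôpital computation.

As `u → -∞`, `erfc(√2 u) → 2`, so `F'(u) ~ -2 e^{u²}`; since `e^{u²}/|u| → ∞`, the `·/∞` form
of L'Hôpital's rule (which needs no information on `F` itself) gives `F(u) ~ e^{u²}/|u|`.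
-/

open Filter MeasureTheory

/-- The complementary error function `erfc(t) = (2/√π) ∫_t^∞ e^{−s²} ds`. -/
noncomputable def erfc (t : ℝ) : ℝ :=
  (2 / Real.sqrt Real.pi) * ∫ s in Set.Ioi t, Real.exp (-s ^ 2)

/-- The class AII† edge limit `D(y) = (1/2) e^{−y²/2} ∫_{y/√2}^∞ e^{v²} erfc(√2 v) dv`. -/
noncomputable def edgeAII (y : ℝ) : ℝ :=
  (1 / 2) * Real.exp (-y ^ 2 / 2) *
    ∫ v in Set.Ioi (y / Real.sqrt 2), Real.exp (v ^ 2) * erfc (Real.sqrt 2 * v)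

open Set Topology Real

section TailIntegral

variable {f : ℝ → ℝ} {a : ℝ}

theorem Continuous.integrableOn_Ioi_of_integrableOn_Ioi (hf : Continuous f)
    (hfi : IntegrableOn f (Ioi a)) (b : ℝ) : IntegrableOn f (Ioi b) := by
  rcases le_total a b with hab | hba
  · exact hfi.mono_set (Ioi_subset_Ioi hab)
  · rw [← Ioc_union_Ioi_eq_Ioi hba]
    exact (hf.integrableOn_Icc.mono_set Ioc_subset_Icc_self).union hfi

theorem integral_Ioi_eq_sub_intervalIntegral (hf : Continuous f) (hfi : IntegrableOn f (Ioi a)) :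
    (fun x => ∫ t in Ioi x, f t) = fun x => (∫ t in Ioi a, f t) - ∫ t in a..x, f t := by
  ext x
  rw [← intervalIntegral.integral_Ioi_sub_Ioi' hfi (hf.integrableOn_Ioi_of_integrableOn_Ioi hfi x),
    sub_sub_cancel]

theorem hasDerivAt_integral_Ioi (hf : Continuous f) (hfi : IntegrableOn f (Ioi a)) (x : ℝ) :
    HasDerivAt (fun x => ∫ t in Ioi x, f t) (-f x) x := by
  rw [integral_Ioi_eq_sub_intervalIntegral hf hfi]
  simpa using ((hf.integral_hasStrictDerivAt a x).hasDerivAt).const_sub (∫ t in Ioi a, f t)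

theorem tendsto_integral_Ioi_atTop (hf : Continuous f) (hfi : IntegrableOn f (Ioi a)) :
    Tendsto (fun x => ∫ t in Ioi x, f t) atTop (𝓝 0) := by
  rw [integral_Ioi_eq_sub_intervalIntegral hf hfi]
  simpa using (intervalIntegral_tendsto_integral_Ioi a hfi tendsto_id).const_sub
    (∫ t in Ioi a, f t)

end TailIntegral

section LHopital

variable {f g f' g' : ℝ → ℝ}

theorem eventually_div_lt_of_hasDerivAt_le_mul {c c' : ℝ}
    (hff' : ∀ᶠ x in atTop, HasDerivAt f (f' x) x) (hgg' : ∀ᶠ x in atTop, HasDerivAt g (g' x) x)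
    (hfg' : ∀ᶠ x in atTop, f' x ≤ c * g' x) (hg : Tendsto g atTop atTop) (hc : c < c') :
    ∀ᶠ x in atTop, f x / g x < c' := by
  obtain ⟨a, ha⟩ := (hff'.and (hgg'.and hfg')).exists_forall_of_atTop
  set h := fun x => c * g x - f x
  have hmono : MonotoneOn h (Ici a) := by
    have hderiv : ∀ x ∈ Ici a, HasDerivAt h (c * g' x - f' x) x :=
      fun x hx => ((ha x hx).2.1.const_mul c).sub (ha x hx).1
    refine monotoneOn_of_hasDerivWithinAt_nonneg (f' := fun x => c * g' x - f' x) (convex_Ici a)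
      (fun x hx => (hderiv x hx).continuousAt.continuousWithinAt) (fun x hx => ?_) (fun x hx => ?_)
    · exact (hderiv x (interior_subset hx)).hasDerivWithinAt
    · exact sub_nonneg.2 (ha x (interior_subset hx)).2.2
  have hsmall : ∀ᶠ x in atTop, -h a / g x < c' - c :=
    (tendsto_const_nhds.div_atTop hg).eventually (gt_mem_nhds (sub_pos.2 hc))
  filter_upwards [hsmall, hg.eventually_gt_atTop 0, eventually_ge_atTop a] with x hx hgx hax
  have hfx : f x ≤ c * g x - h a := by
    have := hmono self_mem_Ici hax hax
    simp only [h] at this ⊢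
    linarith
  calc f x / g x ≤ (c * g x - h a) / g x := by gcongr
    _ = c + -h a / g x := by field_simp; ring
    _ < c' := by linarith

theorem HasDerivAt.lhopital_top_atTop {l : ℝ}
    (hff' : ∀ᶠ x in atTop, HasDerivAt f (f' x) x) (hgg' : ∀ᶠ x in atTop, HasDerivAt g (g' x) x)
    (hg' : ∀ᶠ x in atTop, 0 < g' x) (hg : Tendsto g atTop atTop)
    (hdiv : Tendsto (fun x => f' x / g' x) atTop (𝓝 l)) :
    Tendsto (fun x => f x / g x) atTop (𝓝 l) := by
  refine tendsto_order.2 ⟨fun c' hc' => ?_, fun c' hc' => ?_⟩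
  · obtain ⟨c, hc'c, hcl⟩ := exists_between hc'
    have hfg' : ∀ᶠ x in atTop, -f' x ≤ -c * g' x := by
      filter_upwards [hdiv.eventually (lt_mem_nhds hcl), hg'] with x hx hgx
      have := (lt_div_iff₀ hgx).1 hx
      linarith
    filter_upwards [eventually_div_lt_of_hasDerivAt_le_mul
      (hff'.mono fun x hx => hx.neg) hgg' hfg' hg (neg_lt_neg hc'c)] with x hx
    rw [Pi.neg_apply, neg_div] at hx
    linarith
  · obtain ⟨c, hlc, hcc'⟩ := exists_between hc'
    refine eventually_div_lt_of_hasDerivAt_le_mul hff' hgg' ?_ hg hcc'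
    filter_upwards [hdiv.eventually (gt_mem_nhds hlc), hg'] with x hx hgx
    exact ((div_lt_iff₀ hgx).1 hx).le

end LHopital

theorem integrable_exp_neg_sq : Integrable fun s : ℝ => exp (-s ^ 2) := by
  simpa using integrable_exp_neg_mul_sq one_pos

theorem continuous_exp_neg_sq : Continuous fun s : ℝ => exp (-s ^ 2) := by fun_prop

theorem tendsto_exp_neg_sq_atTop : Tendsto (fun t : ℝ => exp (-t ^ 2)) atTop (𝓝 0) :=
  tendsto_exp_atBot.comp (tendsto_neg_atTop_atBot.comp (tendsto_pow_atTop two_ne_zero))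

theorem hasDerivAt_erfc (t : ℝ) : HasDerivAt erfc (-(2 / √π) * exp (-t ^ 2)) t :=
  ((hasDerivAt_integral_Ioi (a := 0) continuous_exp_neg_sq
    integrable_exp_neg_sq.integrableOn t).const_mul (2 / √π)).congr_deriv (by ring)

theorem continuous_erfc : Continuous erfc :=
  continuous_iff_continuousAt.2 fun t => (hasDerivAt_erfc t).continuousAt

theorem erfc_add_erfc_neg (t : ℝ) : erfc t + erfc (-t) = 2 := by
  have hreflect : ∫ s in Ioi (-t), exp (-s ^ 2) = ∫ s in Iic t, exp (-s ^ 2) := by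
    have := integral_comp_neg_Ioi (-t) fun s => exp (-s ^ 2)
    simp only [neg_sq, neg_neg] at this
    exact this
  have htotal : (∫ s in Iic t, exp (-s ^ 2)) + ∫ s in Ioi t, exp (-s ^ 2) = √π := by
    rw [intervalIntegral.integral_Iic_add_Ioi integrable_exp_neg_sq.integrableOn
      integrable_exp_neg_sq.integrableOn]
    simpa using integral_gaussian 1
  have : √π ≠ 0 := by positivity
  simp only [erfc, hreflect]
  field_simp
  linarith

theorem erfc_nonneg (t : ℝ) : 0 ≤ erfc t :=
  mul_nonneg (by positivity) (setIntegral_nonneg measurableSet_Ioi fun _ _ => (exp_pos _).le)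

theorem erfc_le_two_mul_exp {t : ℝ} (ht : 0 ≤ t) : erfc t ≤ 2 * exp (-t ^ 2) := by
  -- `s² ≥ t² + (s - t)²` for `s ≥ t ≥ 0`
  have hbound : ∫ s in Ioi t, exp (-s ^ 2) ≤ ∫ s in Ioi t, exp (-t ^ 2) * exp (-(s - t) ^ 2) := by
    refine setIntegral_mono_on integrable_exp_neg_sq.integrableOn
      ((integrable_exp_neg_sq.comp_sub_right t).const_mul _).integrableOn measurableSet_Ioi
      fun s hs => ?_
    rw [← exp_add]
    exact exp_le_exp.2 (by nlinarith [mem_Ioi.1 hs])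
  have hshift : ∫ s in Ioi t, exp (-(s - t) ^ 2) ≤ √π := by
    calc ∫ s in Ioi t, exp (-(s - t) ^ 2) ≤ ∫ s, exp (-(s - t) ^ 2) :=
          setIntegral_le_integral (integrable_exp_neg_sq.comp_sub_right t)
            (Eventually.of_forall fun _ => (exp_pos _).le)
      _ = √π := by
          rw [integral_sub_right_eq_self (fun s => exp (-s ^ 2)) t]
          simpa using integral_gaussian 1
  rw [integral_const_mul] at hbound
  have hpi : 0 < √π := by positivity
  calc erfc t ≤ 2 / √π * (exp (-t ^ 2) * √π) := by
        unfold erfc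
        gcongr
        exact hbound.trans (mul_le_mul_of_nonneg_left hshift (exp_pos _).le)
    _ = 2 * exp (-t ^ 2) := by field_simp

theorem tendsto_erfc_atTop : Tendsto erfc atTop (𝓝 0) := by
  have := (tendsto_integral_Ioi_atTop continuous_exp_neg_sq
    (integrable_exp_neg_sq.integrableOn (s := Ioi 0))).const_mul (2 / √π)
  rwa [mul_zero] at this

theorem tendsto_erfc_atBot : Tendsto erfc atBot (𝓝 2) := by
  have : Tendsto (fun t => 2 - erfc (-t)) atBot (𝓝 (2 - 0)) :=
    (tendsto_erfc_atTop.comp tendsto_neg_atBot_atTop).const_sub 2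
  rw [sub_zero] at this
  exact this.congr fun t => by linarith [erfc_add_erfc_neg t]

theorem tendsto_erfc_div_atTop :
    Tendsto (fun t => erfc t / (exp (-t ^ 2) / t)) atTop (𝓝 (1 / √π)) := by
  have hden : ∀ t ≠ 0, HasDerivAt (fun t => exp (-t ^ 2) / t)
      (-(exp (-t ^ 2) * (2 + 1 / t ^ 2))) t := by
    intro t ht
    have h : HasDerivAt (fun s : ℝ => -s ^ 2) (-(2 * t)) t := by
      simpa using (hasDerivAt_pow 2 t).fun_neg
    exact (h.exp.div (hasDerivAt_id' t) ht).congr_deriv (by field_simp; ring)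
  have hratio : Tendsto (fun t : ℝ => 2 / √π / (2 + 1 / t ^ 2)) atTop (𝓝 (2 / √π / (2 + 0))) :=
    tendsto_const_nhds.div (tendsto_const_nhds.add
      (tendsto_const_nhds.div_atTop (tendsto_pow_atTop two_ne_zero))) (by norm_num)
  refine HasDerivAt.lhopital_zero_atTop (Eventually.of_forall hasDerivAt_erfc)
    ((eventually_ne_atTop 0).mono hden) (Eventually.of_forall fun t => ?_) tendsto_erfc_atTop ?_ ?_
  · have : 0 < exp (-t ^ 2) * (2 + 1 / t ^ 2) := by positivity
    exact neg_ne_zero.2 this.ne'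
  · exact tendsto_exp_neg_sq_atTop.div_atTop tendsto_id
  · rw [show 2 / √π / (2 + 0) = 1 / √π by ring] at hratio
    refine hratio.congr fun t => ?_
    have := exp_pos (-t ^ 2)
    field_simp

noncomputable def edgeIntegrand (v : ℝ) : ℝ := exp (v ^ 2) * erfc (√2 * v)

noncomputable def edgeTail (u : ℝ) : ℝ := ∫ v in Ioi u, edgeIntegrand v

theorem edgeAII_eq (y : ℝ) : edgeAII y = 1 / 2 * exp (-y ^ 2 / 2) * edgeTail (y / √2) := rfl

theorem edgeIntegrand_nonneg (v : ℝ) : 0 ≤ edgeIntegrand v :=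
  mul_nonneg (exp_pos _).le (erfc_nonneg _)

theorem continuous_edgeIntegrand : Continuous edgeIntegrand :=
  (continuous_exp.comp (continuous_pow 2)).mul (continuous_erfc.comp (continuous_const_mul √2))

theorem integrableOn_edgeIntegrand_Ioi_zero : IntegrableOn edgeIntegrand (Ioi 0) := by
  refine Integrable.mono' (integrable_exp_neg_sq.const_mul 2).integrableOn
    continuous_edgeIntegrand.aestronglyMeasurable.restrict ?_
  filter_upwards [ae_restrict_mem measurableSet_Ioi] with v hv
  have hv : 0 ≤ √2 * v := mul_nonneg (sqrt_nonneg 2) (le_of_lt hv)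
  rw [norm_of_nonneg (edgeIntegrand_nonneg v)]
  calc edgeIntegrand v ≤ exp (v ^ 2) * (2 * exp (-(√2 * v) ^ 2)) :=
        mul_le_mul_of_nonneg_left (erfc_le_two_mul_exp hv) (exp_pos _).le
    _ = 2 * exp (-v ^ 2) := by
        rw [mul_pow, sq_sqrt zero_le_two, mul_left_comm, ← exp_add]
        ring_nf

theorem hasDerivAt_edgeTail (u : ℝ) : HasDerivAt edgeTail (-edgeIntegrand u) u :=
  hasDerivAt_integral_Ioi continuous_edgeIntegrand integrableOn_edgeIntegrand_Ioi_zero u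

theorem tendsto_edgeTail_atTop : Tendsto edgeTail atTop (𝓝 0) :=
  tendsto_integral_Ioi_atTop continuous_edgeIntegrand integrableOn_edgeIntegrand_Ioi_zero

theorem tendsto_edgeTail_div_atTop :
    Tendsto (fun u => edgeTail u / (exp (-u ^ 2) / u ^ 2)) atTop (𝓝 (1 / √(8 * π))) := by
  have hden : ∀ u ≠ 0, HasDerivAt (fun u => exp (-u ^ 2) / u ^ 2)
      (-(2 * exp (-u ^ 2) * (u ^ 2 + 1) / u ^ 3)) u := by
    intro u hu
    have h : HasDerivAt (fun s : ℝ => -s ^ 2) (-(2 * u)) u := by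
      simpa using (hasDerivAt_pow 2 u).fun_neg
    exact (h.exp.div (hasDerivAt_pow 2 u) (pow_ne_zero 2 hu)).congr_deriv (by field_simp; ring)
  have hratio : Tendsto (fun u => erfc (√2 * u) / (exp (-(√2 * u) ^ 2) / (√2 * u))
      / (2 * √2 * (1 + 1 / u ^ 2))) atTop (𝓝 (1 / √π / (2 * √2 * (1 + 0)))) :=
    (tendsto_erfc_div_atTop.comp (tendsto_id.const_mul_atTop (sqrt_pos.2 two_pos))).div
      (tendsto_const_nhds.mul (tendsto_const_nhds.add
        (tendsto_const_nhds.div_atTop (tendsto_pow_atTop two_ne_zero)))) (by positivity)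
  refine HasDerivAt.lhopital_zero_atTop (Eventually.of_forall hasDerivAt_edgeTail)
    ((eventually_ne_atTop 0).mono hden) ?_ tendsto_edgeTail_atTop ?_ ?_
  · filter_upwards [eventually_gt_atTop 0] with u hu
    have : 0 < 2 * exp (-u ^ 2) * (u ^ 2 + 1) / u ^ 3 := by positivity
    exact neg_ne_zero.2 this.ne'
  · exact tendsto_exp_neg_sq_atTop.div_atTop (tendsto_pow_atTop two_ne_zero)
  · have h8 : √(8 * π) = 2 * √2 * √π := by
      rw [show (8 : ℝ) * π = 2 ^ 2 * 2 * π by norm_num, sqrt_mul (by positivity),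
        sqrt_mul (by positivity), sqrt_sq zero_le_two]
    rw [show 1 / √π / (2 * √2 * (1 + 0)) = 1 / √(8 * π) by rw [h8, add_zero]; field_simp] at hratio
    refine hratio.congr' ?_
    filter_upwards [eventually_gt_atTop 0] with u hu
    simp only [edgeIntegrand, exp_neg, mul_pow, sq_sqrt zero_le_two]
    rw [show 2 * u ^ 2 = u ^ 2 + u ^ 2 by ring, exp_add]
    field_simp

theorem tendsto_edgeTail_neg_div_atTop :
    Tendsto (fun w => edgeTail (-w) / (exp (w ^ 2) / w)) atTop (𝓝 1) := by
  have hnum (w : ℝ) : HasDerivAt (fun w => edgeTail (-w)) (edgeIntegrand (-w)) w :=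
    ((hasDerivAt_edgeTail (-w)).comp w (hasDerivAt_neg w)).congr_deriv (by ring)
  have hden : ∀ w ≠ 0, HasDerivAt (fun w => exp (w ^ 2) / w)
      (exp (w ^ 2) * (2 - 1 / w ^ 2)) w := by
    intro w hw
    exact ((hasDerivAt_pow 2 w).exp.div (hasDerivAt_id' w) hw).congr_deriv (by field_simp; ring)
  have hratio : Tendsto (fun w : ℝ => erfc (-(√2 * w)) / (2 - 1 / w ^ 2)) atTop (𝓝 (2 / (2 - 0))) :=
    (tendsto_erfc_atBot.comp (tendsto_neg_atTop_atBot.comp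
      (tendsto_id.const_mul_atTop (sqrt_pos.2 two_pos)))).div
      (tendsto_const_nhds.sub (tendsto_const_nhds.div_atTop (tendsto_pow_atTop two_ne_zero)))
      (by norm_num)
  refine HasDerivAt.lhopital_top_atTop (Eventually.of_forall hnum)
    ((eventually_ne_atTop 0).mono hden) ?_ ?_ ?_
  · filter_upwards [eventually_gt_atTop 1] with w hw
    have : 1 / w ^ 2 < 2 := by
      rw [div_lt_iff₀ (by positivity)]
      nlinarith
    exact mul_pos (exp_pos _) (by linarith)
  · refine tendsto_atTop_mono' atTop ?_ (by simpa using tendsto_exp_div_pow_atTop 1)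
    filter_upwards [eventually_ge_atTop 1] with w hw
    gcongr
    nlinarith
  · rw [show (2 : ℝ) / (2 - 0) = 1 by norm_num] at hratio
    refine hratio.congr' ?_
    filter_upwards [eventually_gt_atTop 0] with w hw
    simp only [edgeIntegrand, neg_sq, mul_neg]
    have := exp_pos (w ^ 2)
    field_simp

/-- Tail asymptotics of the class AII† edge limit:
`D(y) ~ e^{−y²}/(√(8π) y²)` as `y → +∞` and `D(y) ~ −1/(√2 y)` as `y → −∞`. -/
theorem statement12 :
    Tendsto (fun y : ℝ => Real.sqrt (8 * Real.pi) * y ^ 2 * Real.exp (y ^ 2) * edgeAII y)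
        atTop (nhds 1) ∧
      Tendsto (fun y : ℝ => (-(Real.sqrt 2) * y) * edgeAII y) atBot (nhds 1) := by
  have hsqrt2 : 0 < √2 := sqrt_pos.2 two_pos
  constructor
  · have h := (tendsto_edgeTail_div_atTop.const_mul √(8 * π)).comp
      (tendsto_id.atTop_div_const hsqrt2)
    rw [mul_one_div_cancel (by positivity)] at h
    refine h.congr' ?_
    filter_upwards [eventually_ne_atTop 0] with y hy
    have hexp : exp (y ^ 2) = exp (y ^ 2 / 2) * exp (y ^ 2 / 2) := by rw [← exp_add, add_halves]
    simp only [Function.comp, id, edgeAII_eq, div_pow, sq_sqrt zero_le_two, neg_div, exp_neg, hexp]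
    field_simp
  · have h := tendsto_edgeTail_neg_div_atTop.comp
      (tendsto_neg_atBot_atTop.atTop_div_const hsqrt2)
    refine h.congr fun y => ?_
    simp only [Function.comp, edgeAII_eq, neg_div, neg_neg, neg_sq, div_pow,
      sq_sqrt zero_le_two, exp_neg]
    field_simp
    rw [sq_sqrt zero_le_two]
    ring
end

section
/- Asymptotics of the analytically continued Owen T-function: lim_{v→+∞} v² · e^{v²} · ∫_0^{1/√2} e^{−2v²(1−u²)}/(1−u²) du = 1/√2. (Equivalently, −i√π·T(2v, i/√2) = (1/(2√π)) ∫_0^{1/√2} e^{−2v²(1−u²)}/(1−u²) du behaves like e^{−v²}/(√(8π) v²) as v → ∞.) -/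
/-!
Put `t = v²`, `h u = 1 - 2u²` and `g u = 1 / (1 - u²)`; the expression becomes
`t ∫₀ᵇ e^{-t h u} g u du` with `b = 1/√2` the simple zero of `h`. This is Laplace's method at
an endpoint where the phase vanishes. On `[0, a']` with `a' < b` the phase is at least
`h a' > 0`, so that part is `O(t e^{-t h a'})`. On `[a', b]` write
`t e^{-t h} g = (d/du e^{-t h}) · g / (-h')`: the integral averages `g / (-h')` against a
nonnegative kernel of mass `1 - e^{-t h a'} → 1`, so it tends to `g b / (-h' b) = 2 / (4b) = 1/√2`
as `a' → b`.
-/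

open Filter intervalIntegral Set Real Topology
open MeasureTheory (volume)
open scoped Interval

section LaplaceEndpoint

variable {h h' g : ℝ → ℝ} {a b : ℝ}

lemma tendsto_mul_exp_neg_mul_atTop {c : ℝ} (hc : 0 < c) :
    Tendsto (fun t : ℝ => t * exp (-(t * c))) atTop (𝓝 0) := by
  have := ((tendsto_pow_mul_exp_neg_atTop_nhds_zero 1).comp
    (tendsto_id.atTop_mul_const hc)).const_mul c⁻¹
  rw [mul_zero] at this
  refine this.congr fun t => ?_
  simp only [Function.comp_apply, id, pow_one]
  field_simp

lemma tendsto_mul_integral_exp_neg_mul_of_le {c M : ℝ} (hc : 0 < c)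
    (hh : ∀ u ∈ Ι a b, c ≤ h u) (hg : ∀ u ∈ Ι a b, ‖g u‖ ≤ M) :
    Tendsto (fun t => t * ∫ u in a..b, exp (-(t * h u)) * g u) atTop (𝓝 0) := by
  have hbound : ∀ t ≥ 0,
      ‖t * ∫ u in a..b, exp (-(t * h u)) * g u‖ ≤ t * exp (-(t * c)) * M * |b - a| := by
    intro t ht
    rw [norm_mul, Real.norm_of_nonneg ht, mul_assoc t, mul_assoc t]
    refine mul_le_mul_of_nonneg_left (norm_integral_le_of_norm_le_const fun u hu => ?_) ht
    rw [norm_mul, Real.norm_of_nonneg (exp_pos _).le]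
    exact mul_le_mul (exp_le_exp.2 (by nlinarith [hh u hu])) (hg u hu) (norm_nonneg _)
      (exp_pos _).le
  refine squeeze_zero_norm' (eventually_atTop.2 ⟨0, hbound⟩) ?_
  simpa using ((tendsto_mul_exp_neg_mul_atTop hc).mul_const M).mul_const |b - a|

lemma integral_deriv_exp_neg_mul (hh : ∀ u ∈ uIcc a b, HasDerivAt h (h' u) u)
    (hh' : ContinuousOn h' (uIcc a b)) (t : ℝ) :
    ∫ u in a..b, exp (-(t * h u)) * -(t * h' u) = exp (-(t * h b)) - exp (-(t * h a)) := by
  have hderiv : ∀ u ∈ uIcc a b,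
      HasDerivAt (fun u => exp (-(t * h u))) (exp (-(t * h u)) * -(t * h' u)) u :=
    fun u hu => ((hh u hu).const_mul t).neg.exp
  refine integral_eq_sub_of_hasDerivAt hderiv (ContinuousOn.intervalIntegrable fun u hu => ?_)
  exact (hderiv u hu).continuousAt.continuousWithinAt.mul
    (continuousWithinAt_const.mul (hh' u hu)).neg

lemma abs_integral_sub_mul_integral_le {f K : ℝ → ℝ} {L ε : ℝ} (hab : a ≤ b)
    (hf : IntervalIntegrable f volume a b) (hK : IntervalIntegrable K volume a b)
    (hfK : ∀ u ∈ Ioc a b, |f u - L * K u| ≤ ε * K u) :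
    |(∫ u in a..b, f u) - L * ∫ u in a..b, K u| ≤ ε * ∫ u in a..b, K u := by
  rw [← integral_const_mul, ← integral_sub hf (hK.const_mul L), ← integral_const_mul,
    ← Real.norm_eq_abs]
  exact norm_integral_le_of_norm_le hab (Eventually.of_forall hfK) (hK.const_mul ε)

lemma abs_mul_integral_exp_neg_mul_sub_le {L ε t : ℝ} (hab : a ≤ b)
    (hh : ∀ u ∈ Icc a b, HasDerivAt h (h' u) u) (hh' : ContinuousOn h' (Icc a b))
    (hneg : ∀ u ∈ Icc a b, h' u < 0) (hb : h b = 0) (hg : ContinuousOn g (Icc a b))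
    (hclose : ∀ u ∈ Icc a b, |g u / -h' u - L| ≤ ε) (ht : 0 ≤ t) :
    |t * (∫ u in a..b, exp (-(t * h u)) * g u) - L * (1 - exp (-(t * h a)))| ≤
      ε * (1 - exp (-(t * h a))) := by
  rw [← uIcc_of_le hab] at hh hh' hg
  have hmass := integral_deriv_exp_neg_mul hh hh' t
  rw [hb, mul_zero, neg_zero, exp_zero] at hmass
  have hexp : ContinuousOn (fun u => exp (-(t * h u))) (uIcc a b) := fun u hu =>
    (((hh u hu).continuousAt.continuousWithinAt).const_mul t).neg.rexp
  rw [← hmass, ← integral_const_mul t]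
  refine abs_integral_sub_mul_integral_le (f := fun u => t * (exp (-(t * h u)) * g u))
    (K := fun u => exp (-(t * h u)) * -(t * h' u)) hab
    ((continuousOn_const.mul (hexp.mul hg)).intervalIntegrable)
    ((hexp.mul (continuousOn_const.mul hh').neg).intervalIntegrable) fun u hu => ?_
  have hu : u ∈ Icc a b := Ioc_subset_Icc_self hu
  have hK : 0 ≤ exp (-(t * h u)) * -(t * h' u) :=
    mul_nonneg (exp_pos _).le (by nlinarith [hneg u hu])
  have hsplit : t * (exp (-(t * h u)) * g u) - L * (exp (-(t * h u)) * -(t * h' u)) =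
      exp (-(t * h u)) * -(t * h' u) * (g u / -h' u - L) := by
    field_simp [(hneg u hu).ne]
    ring
  rw [hsplit, abs_mul, abs_of_nonneg hK, mul_comm ε]
  exact mul_le_mul_of_nonneg_left (hclose u hu) hK

lemma strictAntiOn_Icc_of_hasDerivAt_neg (hh : ∀ u ∈ Icc a b, HasDerivAt h (h' u) u)
    (hneg : ∀ u ∈ Ioo a b, h' u < 0) : StrictAntiOn h (Icc a b) := by
  refine strictAntiOn_of_hasDerivWithinAt_neg (f' := h') (convex_Icc a b)
    (fun u hu => (hh u hu).continuousAt.continuousWithinAt) (fun u hu => ?_) fun u hu => ?_ <;>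
    rw [interior_Icc] at hu
  · exact (hh u (Ioo_subset_Icc_self hu)).hasDerivWithinAt
  · exact hneg u hu

lemma exists_mem_Ioo_forall_Icc_abs_sub_le {ρ : ℝ → ℝ} (hab : a < b)
    (hρ : ContinuousWithinAt ρ (Icc a b) b) {ε : ℝ} (hε : 0 < ε) :
    ∃ a' ∈ Ioo a b, ∀ u ∈ Icc a' b, |ρ u - ρ b| ≤ ε := by
  rw [ContinuousWithinAt, nhdsWithin_Icc_eq_nhdsLE hab] at hρ
  obtain ⟨a', ha'b, hsub⟩ := mem_nhdsLE_iff_exists_Icc_subset.1 (inter_mem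
    (hρ (Metric.closedBall_mem_nhds (ρ b) hε)) (mem_nhdsWithin_of_mem_nhds (Ioi_mem_nhds hab)))
  refine ⟨a', ⟨(hsub (left_mem_Icc.2 ha'b.le)).2, ha'b⟩, fun u hu => ?_⟩
  simpa only [mem_preimage, Metric.mem_closedBall, Real.dist_eq] using (hsub hu).1

theorem tendsto_mul_integral_exp_neg_mul (hab : a < b)
    (hh : ∀ u ∈ Icc a b, HasDerivAt h (h' u) u) (hh' : ContinuousOn h' (Icc a b))
    (hneg : ∀ u ∈ Ioc a b, h' u < 0) (hb : h b = 0) (hg : ContinuousOn g (Icc a b)) :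
    Tendsto (fun t => t * ∫ u in a..b, exp (-(t * h u)) * g u) atTop (𝓝 (g b / -h' b)) := by
  have hbmem : b ∈ Icc a b := right_mem_Icc.2 hab.le
  have hcont : ContinuousOn h (Icc a b) := fun u hu =>
    (hh u hu).continuousAt.continuousWithinAt
  have hanti := strictAntiOn_Icc_of_hasDerivAt_neg hh fun u hu => hneg u (Ioo_subset_Ioc_self hu)
  have hρ : ContinuousWithinAt (fun u => g u / -h' u) (Icc a b) b :=
    (hg b hbmem).div (hh' b hbmem).neg (neg_ne_zero.2 (hneg b ⟨hab, le_rfl⟩).ne)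
  rw [Metric.tendsto_nhds]
  intro ε hε
  obtain ⟨a', ⟨haa', ha'b⟩, hclose⟩ :=
    exists_mem_Ioo_forall_Icc_abs_sub_le hab hρ (half_pos hε)
  have hsub : Icc a' b ⊆ Icc a b := Icc_subset_Icc_left haa'.le
  have hha' : 0 < h a' := hb ▸ hanti ⟨haa'.le, ha'b.le⟩ hbmem ha'b
  obtain ⟨M, hM⟩ := isCompact_Icc.exists_bound_of_continuousOn hg
  have hleft : ∀ u ∈ Ι a a', u ∈ Icc a b ∧ u ≤ a' := fun u hu => by
    rw [uIoc_of_le haa'.le] at hu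
    exact ⟨⟨hu.1.le, hu.2.trans ha'b.le⟩, hu.2⟩
  have htail := tendsto_mul_integral_exp_neg_mul_of_le (g := g) hha'
    (fun u hu => hanti.antitoneOn (hleft u hu).1 ⟨haa'.le, ha'b.le⟩ (hleft u hu).2)
    fun u hu => hM u (hleft u hu).1
  have hrest := (tendsto_exp_neg_atTop_nhds_zero.comp
    (tendsto_id.atTop_mul_const hha')).const_mul (g b / -h' b)
  rw [mul_zero] at hrest
  filter_upwards [htail.eventually (Metric.ball_mem_nhds 0 (by positivity : 0 < ε / 4)),
    hrest.eventually (Metric.ball_mem_nhds 0 (by positivity : 0 < ε / 4)),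
    eventually_ge_atTop 0] with t hT hE ht
  have hnear := abs_mul_integral_exp_neg_mul_sub_le ha'b.le (fun u hu => hh u (hsub hu))
    (hh'.mono hsub) (fun u hu => hneg u ⟨haa'.trans_le hu.1, hu.2⟩) hb (hg.mono hsub)
    hclose ht
  have hF : ContinuousOn (fun u => exp (-(t * h u)) * g u) (Icc a b) :=
    (continuousOn_const.mul hcont).neg.rexp.mul hg
  rw [← integral_add_adjacent_intervals
    ((hF.mono (Icc_subset_Icc_right ha'b.le)).intervalIntegrable_of_Icc haa'.le)
    ((hF.mono hsub).intervalIntegrable_of_Icc ha'b.le), mul_add, Real.dist_eq]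
  simp only [Real.dist_eq, sub_zero, Function.comp_apply, id] at hT hE
  have hmass : ε / 2 * (1 - exp (-(t * h a'))) ≤ ε / 2 := by nlinarith [exp_pos (-(t * h a'))]
  obtain ⟨hT₁, hT₂⟩ := abs_lt.1 hT
  obtain ⟨hE₁, hE₂⟩ := abs_lt.1 hE
  obtain ⟨hn₁, hn₂⟩ := abs_le.1 hnear
  exact abs_lt.2 ⟨by linarith, by linarith⟩

end LaplaceEndpoint

/-- Asymptotics of the analytically continued Owen T-function:
`v² e^{v²} ∫_0^{1/√2} e^{−2v²(1−u²)}/(1−u²) du → 1/√2` as `v → +∞`. -/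
theorem statement14 :
    Tendsto (fun v : ℝ =>
        v ^ 2 * Real.exp (v ^ 2) *
          ∫ u in (0 : ℝ)..(1 / Real.sqrt 2),
            Real.exp (-(2 * v ^ 2 * (1 - u ^ 2))) / (1 - u ^ 2))
      atTop (nhds (1 / Real.sqrt 2)) := by
  have hb : (1 / √2) ^ 2 = 1 / 2 := by rw [div_pow, one_pow, sq_sqrt zero_le_two]
  have hlim := tendsto_mul_integral_exp_neg_mul (h := fun u => 1 - 2 * u ^ 2)
    (h' := fun u => -(4 * u)) (g := fun u => (1 - u ^ 2)⁻¹) (a := 0) (b := 1 / √2)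
    (by positivity)
    (fun u _ => (((hasDerivAt_pow 2 u).const_mul 2).const_sub 1).congr_deriv (by norm_num; ring))
    (by fun_prop) (fun u hu => by linarith [hu.1]) (by simp only [hb]; norm_num)
    (ContinuousOn.inv₀ (by fun_prop) fun u hu => by nlinarith [hu.1, hu.2])
  have hval : (1 - (1 / √2) ^ 2)⁻¹ / -(-(4 * (1 / √2))) = 1 / √2 := by
    rw [hb, neg_neg]
    field_simp
    norm_num
  rw [hval] at hlim
  refine (hlim.comp (tendsto_pow_atTop two_ne_zero)).congr fun v => ?_
  rw [Function.comp_apply, mul_assoc, ← integral_const_mul, ← integral_const_mul,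
    ← integral_const_mul]
  refine integral_congr fun u _ => ?_
  rw [div_eq_mul_inv, ← mul_assoc (exp _), ← exp_add]
  congr 3
  ring
end

section
/- Bulk limit for class AI†: fix ρ with 0 ≤ ρ < 1, y ∈ ℝ and c ∈ ℂ, and set x_N := N·ρ + √(2N)·y + c. Then lim_{N→∞} e^{−x_N} · [E_N(x_N) − (x_N/(N+1)) · E_{N−1}(x_N)] = 1 − ρ. -/
open Filter Finset

/-!
Only `x_N / N → ρ` matters. Since `N^N / N! ≤ e^N`, the quantity `e^{-Re x} ‖x‖^N / N!` is at most
`(ρ e^{1-ρ} + o(1))^N`, which tends to `0` because `ρ e^{1-ρ} < 1` for `ρ ≠ 1`. The tail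
`e^x - E_N(x)` is dominated by a geometric series of ratio `‖x‖ / (N + 2) → ρ < 1` starting at
`‖x‖^{N+1} / (N+1)!`, so `e^{-x} E_N(x) → 1`; the same holds for `E_{N-1}`, which differs by one
term, and `x / (N + 1) → ρ` gives the limit `1 - ρ`.
-/

open Topology Nat Real

lemma truncExp_succ (n : ℕ) (x : ℂ) :
    truncExp (n + 1) x = truncExp n x + x ^ (n + 1) / (n + 1)! := by
  rw [truncExp, sum_range_succ, ← truncExp]

lemma norm_exp_sub_truncExp_le {x : ℂ} {n : ℕ} (hx : ‖x‖ < n + 2) :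
    ‖Complex.exp x - truncExp n x‖ ≤ ‖x‖ ^ (n + 1) / (n + 1)! * (1 - ‖x‖ / (n + 2))⁻¹ := by
  set q := ‖x‖ / (n + 2) with hq
  have hq1 : q < 1 := (div_lt_one (by positivity)).2 hx
  have htail : Complex.exp x - truncExp n x = ∑' k : ℕ, x ^ (k + (n + 1)) / (k + (n + 1))! := by
    rw [Complex.exp_eq_exp_ℂ, NormedSpace.exp_eq_tsum_div, truncExp]
    beta_reduce
    rw [← (NormedSpace.expSeries_div_summable x).sum_add_tsum_nat_add (n + 1),
      add_sub_cancel_left]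
  rw [htail]
  refine tsum_of_norm_bounded ((hasSum_geometric_of_lt_one (by positivity) hq1).mul_left _)
    fun k => ?_
  have hfact : ((n + 1)! * (n + 2) ^ k : ℝ) ≤ (k + (n + 1))! := by
    rw [add_comm k]
    exact_mod_cast Nat.factorial_mul_pow_le_factorial
  calc ‖x ^ (k + (n + 1)) / ((k + (n + 1))! : ℂ)‖
      = ‖x‖ ^ (k + (n + 1)) / (k + (n + 1))! := by simp
    _ ≤ ‖x‖ ^ (k + (n + 1)) / ((n + 1)! * (n + 2) ^ k) := by gcongr
    _ = ‖x‖ ^ (n + 1) / (n + 1)! * q ^ k := by rw [hq, div_pow]; ring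

lemma exp_neg_mul_pow_div_factorial_le {u : ℝ} (r : ℝ) (hu : 0 ≤ u) {n : ℕ} (hn : n ≠ 0) :
    exp (-r) * u ^ n / n ! ≤ (u / n * exp (1 - r / n)) ^ n := by
  have hn' : (0 : ℝ) < n := by positivity
  have hpow : (n : ℝ) ^ n / n ! ≤ exp n := pow_div_factorial_le_exp _ hn'.le n
  have hrhs : (u / n * exp (1 - r / n)) ^ n = exp (-r) * u ^ n * (exp n / (n : ℝ) ^ n) := by
    rw [mul_pow, div_pow, ← Real.exp_nat_mul, mul_one_sub, mul_div_cancel₀ _ hn'.ne',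
      sub_eq_neg_add, Real.exp_add]
    field_simp
  rw [hrhs, ← mul_one_div (exp (-r) * u ^ n)]
  refine mul_le_mul_of_nonneg_left ?_ (by positivity)
  rw [div_le_div_iff₀ (by positivity) (by positivity), one_mul]
  exact (div_le_iff₀ (by positivity)).1 hpow

lemma mul_exp_one_sub_lt_one {ρ : ℝ} (hρ : ρ ≠ 1) : ρ * exp (1 - ρ) < 1 := by
  have h : ρ < exp (ρ - 1) := by simpa using add_one_lt_exp (sub_ne_zero.2 hρ)
  calc ρ * exp (1 - ρ) < exp (ρ - 1) * exp (1 - ρ) := by gcongr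
    _ = 1 := by rw [← Real.exp_add]; simp

lemma Filter.Tendsto.div_natCast_add {𝕜 : Type*} [RCLike 𝕜]
    {u : ℕ → 𝕜} {a : 𝕜} (hu : Tendsto (fun n => u n / n) atTop (𝓝 a)) (k : 𝕜) :
    Tendsto (fun n => u n / (n + k)) atTop (𝓝 a) := by
  refine (mul_one a ▸ hu.mul (tendsto_natCast_div_add_atTop k)).congr' ?_
  filter_upwards [eventually_ne_atTop 0] with n hn
  exact div_mul_div_cancel₀ (Nat.cast_ne_zero.2 hn)

lemma tendsto_exp_neg_re_mul_pow_div_factorial {x : ℕ → ℂ} {ρ : ℝ} (hρ0 : 0 ≤ ρ) (hρ1 : ρ ≠ 1)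
    (hx : Tendsto (fun n => x n / n) atTop (𝓝 ρ)) :
    Tendsto (fun n => exp (-(x n).re) * ‖x n‖ ^ n / n !) atTop (𝓝 0) := by
  have hnorm : Tendsto (fun n => ‖x n‖ / n) atTop (𝓝 ρ) := by
    simpa [abs_of_nonneg hρ0] using hx.norm
  have hre : Tendsto (fun n => (x n).re / n) atTop (𝓝 ρ) := by
    simpa [Function.comp_def] using (Complex.continuous_re.tendsto _).comp hx
  obtain ⟨q, hq, hq1⟩ := exists_between (mul_exp_one_sub_lt_one hρ1)
  have ht : ∀ᶠ n : ℕ in atTop, ‖x n‖ / n * exp (1 - (x n).re / n) < q :=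
    (hnorm.mul (tendsto_const_nhds.sub hre).rexp).eventually_lt_const hq
  have hq0 : 0 ≤ q := (by positivity : 0 ≤ ρ * exp (1 - ρ)).trans hq.le
  refine squeeze_zero' (.of_forall fun n => by positivity) ?_
    (tendsto_pow_atTop_nhds_zero_of_lt_one hq0 hq1)
  filter_upwards [ht, eventually_ne_atTop 0] with n htn hn
  calc exp (-(x n).re) * ‖x n‖ ^ n / n ! ≤ (‖x n‖ / n * exp (1 - (x n).re / n)) ^ n :=
        exp_neg_mul_pow_div_factorial_le _ (norm_nonneg _) hn
    _ ≤ q ^ n := by gcongr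

lemma tendsto_exp_neg_mul_truncExp {x : ℕ → ℂ} {ρ : ℝ} (hρ0 : 0 ≤ ρ) (hρ1 : ρ < 1)
    (hx : Tendsto (fun n => x n / n) atTop (𝓝 ρ)) :
    Tendsto (fun n => Complex.exp (-x n) * truncExp n (x n)) atTop (𝓝 1) := by
  have hnorm : Tendsto (fun n => ‖x n‖ / n) atTop (𝓝 ρ) := by
    simpa [abs_of_nonneg hρ0] using hx.norm
  have hnorm1 := hnorm.div_natCast_add 1
  have hnorm2 := hnorm.div_natCast_add 2
  have hbound : Tendsto (fun n => exp (-(x n).re) * ‖x n‖ ^ n / n ! * (‖x n‖ / (n + 1)) *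
      (1 - ‖x n‖ / (n + 2))⁻¹) atTop (𝓝 0) := by
    simpa using ((tendsto_exp_neg_re_mul_pow_div_factorial hρ0 hρ1.ne hx).mul hnorm1).mul
      ((tendsto_const_nhds.sub hnorm2).inv₀ (sub_ne_zero.2 hρ1.ne'))
  refine tendsto_iff_norm_sub_tendsto_zero.2
    (squeeze_zero' (.of_forall fun n => norm_nonneg _) ?_ hbound)
  filter_upwards [hnorm2.eventually_lt_const hρ1] with n hn
  have hxn : ‖x n‖ < n + 2 := (div_lt_one (by positivity)).1 hn
  calc ‖Complex.exp (-x n) * truncExp n (x n) - 1‖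
      = exp (-(x n).re) * ‖Complex.exp (x n) - truncExp n (x n)‖ := by
        have hinv : Complex.exp (-x n) * Complex.exp (x n) = 1 := by
          rw [← Complex.exp_add, neg_add_cancel, Complex.exp_zero]
        rw [show Complex.exp (-x n) * truncExp n (x n) - 1
            = -(Complex.exp (-x n) * (Complex.exp (x n) - truncExp n (x n))) by
              linear_combination hinv,
          norm_neg, norm_mul, Complex.norm_exp, Complex.neg_re]
    _ ≤ exp (-(x n).re) * (‖x n‖ ^ (n + 1) / (n + 1)! * (1 - ‖x n‖ / (n + 2))⁻¹) := by
        gcongr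
        exact norm_exp_sub_truncExp_le hxn
    _ = _ := by
        push_cast [Nat.factorial_succ]
        field_simp
        ring

theorem tendsto_exp_neg_mul_truncExp_sub_div_mul_truncExp {x : ℕ → ℂ} {ρ : ℝ} (hρ0 : 0 ≤ ρ)
    (hρ1 : ρ < 1) (hx : Tendsto (fun n => x n / n) atTop (𝓝 ρ)) :
    Tendsto (fun n => Complex.exp (-x n) *
      (truncExp n (x n) - x n / (n + 1) * truncExp (n - 1) (x n))) atTop (𝓝 (1 - ρ)) := by
  have hE := tendsto_exp_neg_mul_truncExp hρ0 hρ1 hx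
  have hterm : Tendsto (fun n => Complex.exp (-x n) * (x n ^ n / n !)) atTop (𝓝 0) := by
    refine tendsto_zero_iff_norm_tendsto_zero.2
      ((tendsto_exp_neg_re_mul_pow_div_factorial hρ0 hρ1.ne hx).congr fun n => ?_)
    simp [Complex.norm_exp, mul_div_assoc]
  have hE' : Tendsto (fun n => Complex.exp (-x n) * truncExp (n - 1) (x n)) atTop (𝓝 1) := by
    refine (sub_zero (1 : ℂ) ▸ hE.sub hterm).congr' ?_
    filter_upwards [eventually_ne_atTop 0] with n hn
    obtain ⟨m, rfl⟩ := Nat.exists_eq_add_one_of_ne_zero hn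
    rw [Nat.add_sub_cancel, truncExp_succ]
    ring
  have h := hE.sub ((hx.div_natCast_add 1).mul hE')
  rw [mul_one] at h
  exact h.congr fun n => by ring

lemma tendsto_sqrt_mul_div_natCast (a : ℝ) :
    Tendsto (fun n : ℕ => √(a * n) / n) atTop (𝓝 0) := by
  have h : Tendsto (fun n : ℕ => √a * √(n : ℝ)⁻¹) atTop (𝓝 0) := by
    simpa using (tendsto_inv_atTop_nhds_zero_nat (𝕜 := ℝ)).sqrt.const_mul √a
  refine h.congr fun n => ?_
  rw [Real.sqrt_mul' _ n.cast_nonneg, mul_div_assoc, Real.sqrt_div_self', Real.sqrt_inv, one_div]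

/-- Bulk limit for class AI† (complex symmetric): with `x_N = Nρ + √(2N) y + c` and
`0 ≤ ρ < 1`, `e^{−x_N} [E_N(x_N) − (x_N/(N+1)) E_{N−1}(x_N)] → 1 − ρ`. -/
theorem statement15 (ρ : ℝ) (hρ0 : 0 ≤ ρ) (hρ1 : ρ < 1) (y : ℝ) (c : ℂ) :
    Tendsto (fun N : ℕ =>
        Complex.exp (-((N : ℂ) * (ρ : ℂ) + (Real.sqrt (2 * N) : ℝ) * (y : ℂ) + c)) *
          (truncExp N ((N : ℂ) * (ρ : ℂ) + (Real.sqrt (2 * N) : ℝ) * (y : ℂ) + c) -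
            (((N : ℂ) * (ρ : ℂ) + (Real.sqrt (2 * N) : ℝ) * (y : ℂ) + c) / ((N : ℂ) + 1)) *
              truncExp (N - 1) ((N : ℂ) * (ρ : ℂ) + (Real.sqrt (2 * N) : ℝ) * (y : ℂ) + c)))
      atTop (nhds (((1 - ρ : ℝ)) : ℂ)) := by
  have hx : Tendsto (fun N : ℕ => ((N : ℂ) * ρ + (Real.sqrt (2 * N) : ℝ) * y + c) / N)
      atTop (𝓝 ρ) := by
    have hlim : Tendsto (fun N : ℕ => (ρ : ℂ) + ((√(2 * N) / N : ℝ) : ℂ) * y + c / N)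
        atTop (𝓝 ρ) := by
      simpa using ((Complex.continuous_ofReal.tendsto 0).comp (tendsto_sqrt_mul_div_natCast 2)
        |>.mul_const (y : ℂ) |>.const_add (ρ : ℂ)).add (tendsto_const_div_atTop_nhds_zero_nat c)
    refine hlim.congr' ?_
    filter_upwards [eventually_ne_atTop 0] with N hN
    push_cast
    field_simp
  simpa using tendsto_exp_neg_mul_truncExp_sub_div_mul_truncExp hρ0 hρ1 hx
end
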